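/- arXiv:2205.08627 — 5 statements merged into one kernel-verified Lean document; each statement's English description precedes it below -/
import Mathlib

section
/- Let 𝒫_0 denote the set of distributions P of (X,Ω) on X × {0,1}^d under which X and Ω are independent, and let 𝒫_0' denote the set of distributions P for which the family (P_S : S ∈ 𝕊_P) of conditional distributions of X_S given Ω = 1_S is compatible. Then 𝒫_0 ⊆ 𝒫_0', and for every n ∈ ℕ and every measurable function ψ : (∏_{j=1}^d (X_j ∪ {⋆}))^n → [0,1], one has sup_{P ∈ 𝒫_0'} E_P ψ(X_1∘Ω_1, …, X_n∘Ω_n) = sup_{P ∈ 𝒫_0} E_P ψ(X_1∘Ω_1, …, X_n∘Ω_n), where (X_1,Ω_1), …, (X_n,Ω_n) are i.i.d. with distribution P. -/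
/-! On the event `Ω = 1_S` the observation `X ∘ Ω` is a function of `X_S`, so the law of `X ∘ Ω`
is determined by the pattern probabilities `P(Ω = 1_S)` together with the conditional laws `P_S`.
If `Q` witnesses the compatibility of the `P_S`, the MCAR law `Q ⊗ P_Ω` has the same pattern
probabilities and conditional laws, hence the same law of `X ∘ Ω` and of the sample: every
expected test value attained on `𝒫₀'` is already attained on `𝒫₀`. -/

open MeasureTheory

/-- The natural σ-algebra on `Option α` (i.e. on `𝒳_j ∪ {⋆}`): a set is measurable iff its
trace on `α` is measurable; equivalently, the σ-algebra transported from `α ⊕ Unit`. -/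
instance Option.instMeasurableSpace' {α : Type*} [m : MeasurableSpace α] :
    MeasurableSpace (Option α) := m.map some

variable {d : ℕ} {X : Fin d → Type*} [∀ j, MeasurableSpace (X j)]

/-- The observation map `(x, ω) ↦ x ∘ ω`, where entry `j` is `x_j` if `ω_j = 1` and the
missingness symbol `⋆` (here `none`) if `ω_j = 0`. -/
def obsMap (z : (∀ j, X j) × (Fin d → Bool)) : ∀ j, Option (X j) :=
  fun j => if z.2 j then some (z.1 j) else none

/-- The indicator vector `1_S ∈ {0,1}^d` of `S ⊆ [d]`. -/
def onesOf (S : Finset (Fin d)) : Fin d → Bool := fun j => decide (j ∈ S)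

/-- The conditional distribution `P_S` of `X_S` given `Ω = 1_S`. -/
noncomputable def condLaw (P : Measure ((∀ j, X j) × (Fin d → Bool))) (S : Finset (Fin d)) :
    Measure (∀ j : {i : Fin d // i ∈ S}, X j.1) :=
  (ProbabilityTheory.cond P {z | z.2 = onesOf S}).map fun z j => z.1 j.1

/-- `𝒫₀`: the set of (probability) distributions of `(X, Ω)` under which `X ⫫ Ω`,
i.e. the MCAR null hypothesis. -/
def MCARSet (X : Fin d → Type*) [∀ j, MeasurableSpace (X j)] :
    Set (Measure ((∀ j, X j) × (Fin d → Bool))) :=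
  {P | IsProbabilityMeasure P ∧ P = (P.map Prod.fst).prod (P.map Prod.snd)}

/-- `𝒫₀'`: the set of (probability) distributions of `(X, Ω)` for which the family
`(P_S : S ∈ 𝕊_P)` of conditional distributions is compatible, i.e. there is one probability
measure `Q` on `𝒳` whose margin on `𝒳_S` is `P_S` for every observable pattern `S`. -/
def CompatSet (X : Fin d → Type*) [∀ j, MeasurableSpace (X j)] :
    Set (Measure ((∀ j, X j) × (Fin d → Bool))) :=
  {P | IsProbabilityMeasure P ∧ ∃ Q : Measure (∀ j, X j), IsProbabilityMeasure Q ∧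
    ∀ S : Finset (Fin d), P {z | z.2 = onesOf S} ≠ 0 →
      Q.map (fun x (j : {i : Fin d // i ∈ S}) => x j.1) = condLaw P S}

/-- `E_P ψ(X₁ ∘ Ω₁, …, X_n ∘ Ω_n)` for i.i.d. data with common law `P`. -/
noncomputable def expTest (n : ℕ) (ψ : (Fin n → ∀ j, Option (X j)) → ℝ)
    (P : Measure ((∀ j, X j) × (Fin d → Bool))) : ℝ :=
  ∫ z, ψ z ∂(Measure.pi fun _ : Fin n => P.map obsMap)

open ProbabilityTheory

lemma measurable_option_some {α : Type*} [MeasurableSpace α] :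
    Measurable (some : α → Option α) :=
  fun _ ht => ht

lemma measurable_obsMap : Measurable (obsMap (X := X)) :=
  measurable_pi_lambda _ fun j => by
    have hΩ : Measurable fun z : (∀ j, X j) × (Fin d → Bool) => z.2 j :=
      (measurable_pi_apply j).comp measurable_snd
    exact Measurable.ite (hΩ (measurableSet_singleton true))
      (measurable_option_some.comp ((measurable_pi_apply j).comp measurable_fst)) measurable_const

lemma map_snd_apply_onesOf (P : Measure ((∀ j, X j) × (Fin d → Bool))) (S : Finset (Fin d)) :
    P.map Prod.snd {onesOf S} = P {z | z.2 = onesOf S} :=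
  Measure.map_apply measurable_snd (measurableSet_singleton _)

lemma measurable_restrict_fst (S : Finset (Fin d)) :
    Measurable fun z : (∀ j, X j) × (Fin d → Bool) => S.restrict z.1 :=
  (Finset.measurable_restrict S).comp measurable_fst

lemma condLaw_eq_map_cond (P : Measure ((∀ j, X j) × (Fin d → Bool))) (S : Finset (Fin d)) :
    condLaw P S = (P[|Prod.snd ← onesOf S]).map (fun z => S.restrict z.1) :=
  rfl

lemma onesOf_surjective : Function.Surjective (onesOf (d := d)) :=
  fun ω => ⟨Finset.univ.filter (ω · = true), funext fun j => by simp [onesOf]⟩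

/-- The observation `x ∘ 1_S` as a function of `x_S`. -/
def extendNone (S : Finset (Fin d)) (y : ∀ j : S, X j) : ∀ j, Option (X j) :=
  fun j => if h : j ∈ S then some (y ⟨j, h⟩) else none

lemma measurable_extendNone (S : Finset (Fin d)) : Measurable (extendNone (X := X) S) :=
  measurable_pi_lambda _ fun j => by
    by_cases h : j ∈ S
    · simp only [extendNone, dif_pos h]
      exact measurable_option_some.comp (measurable_pi_apply _)
    · simp only [extendNone, dif_neg h, measurable_const]

omit [∀ j, MeasurableSpace (X j)] in
lemma obsMap_eq_extendNone {S : Finset (Fin d)} {z : (∀ j, X j) × (Fin d → Bool)}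
    (hz : z.2 = onesOf S) : obsMap z = extendNone S (S.restrict z.1) := by
  funext j
  by_cases h : j ∈ S <;> simp [obsMap, extendNone, hz, onesOf, h]

lemma map_obsMap_cond_eq (P : Measure ((∀ j, X j) × (Fin d → Bool))) (S : Finset (Fin d)) :
    (P[|Prod.snd ← onesOf S]).map obsMap = (condLaw P S).map (extendNone S) := by
  have hpat : MeasurableSet (Prod.snd ⁻¹' {onesOf S} : Set ((∀ j, X j) × (Fin d → Bool))) :=
    measurable_snd (measurableSet_singleton _)
  rw [condLaw_eq_map_cond, Measure.map_map (measurable_extendNone S) (measurable_restrict_fst S)]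
  exact Measure.map_congr <| (ae_cond_mem hpat).mono fun z hz => obsMap_eq_extendNone hz

lemma map_obsMap_eq_sum (P : Measure ((∀ j, X j) × (Fin d → Bool))) [IsFiniteMeasure P] :
    P.map obsMap = ∑ ω, P (Prod.snd ⁻¹' {ω}) • (P[|Prod.snd ← ω]).map obsMap := by
  conv_lhs => rw [← sum_meas_smul_cond_fiber measurable_snd P]
  rw [← Measure.mapₗ_apply_of_measurable measurable_obsMap, map_sum]
  simp only [Measure.mapₗ_apply_of_measurable measurable_obsMap, Measure.map_smul]

lemma map_obsMap_eq_of_condLaw_eq {P P' : Measure ((∀ j, X j) × (Fin d → Bool))}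
    [IsFiniteMeasure P] [IsFiniteMeasure P']
    (hpat : ∀ S, P {z | z.2 = onesOf S} = P' {z | z.2 = onesOf S})
    (hcond : ∀ S, P {z | z.2 = onesOf S} ≠ 0 → condLaw P S = condLaw P' S) :
    P.map obsMap = P'.map obsMap := by
  rw [map_obsMap_eq_sum P, map_obsMap_eq_sum P']
  refine Finset.sum_congr rfl fun ω _ => ?_
  obtain ⟨S, rfl⟩ := onesOf_surjective ω
  rw [map_obsMap_cond_eq, map_obsMap_cond_eq]
  change P {z | z.2 = onesOf S} • _ = P' {z | z.2 = onesOf S} • _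
  by_cases h : P {z | z.2 = onesOf S} = 0
  · rw [h, ← hpat, h, zero_smul, zero_smul]
  · rw [hpat, hcond S h]

lemma condLaw_prod (Q : Measure (∀ j, X j)) [IsProbabilityMeasure Q]
    (ν : Measure (Fin d → Bool)) [IsFiniteMeasure ν] {S : Finset (Fin d)}
    (hS : ν {onesOf S} ≠ 0) :
    condLaw (Q.prod ν) S = Q.map S.restrict := by
  ext u hu
  have hfst : (fun z : (∀ j, X j) × (Fin d → Bool) => S.restrict z.1) ⁻¹' u =
      (S.restrict ⁻¹' u) ×ˢ Set.univ :=
    (Set.prod_univ (s := S.restrict ⁻¹' u)).symm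
  rw [condLaw_eq_map_cond, Measure.map_apply (measurable_restrict_fst S) hu,
    Measure.map_apply (Finset.measurable_restrict S) hu, ← Set.univ_prod,
    cond_apply (MeasurableSet.univ.prod (measurableSet_singleton _)),
    hfst, Set.prod_inter_prod,
    Set.univ_inter, Set.inter_univ, Measure.prod_prod, Measure.prod_prod, measure_univ, one_mul,
    mul_comm (Q _), ← mul_assoc, ENNReal.inv_mul_cancel hS (measure_ne_top _ _), one_mul]

lemma prod_mem_MCARSet (Q : Measure (∀ j, X j)) [IsProbabilityMeasure Q]
    (ν : Measure (Fin d → Bool)) [IsProbabilityMeasure ν] :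
    Q.prod ν ∈ MCARSet X :=
  ⟨inferInstance, by rw [Measure.map_fst_prod, Measure.map_snd_prod, measure_univ, measure_univ,
    one_smul, one_smul]⟩

lemma MCARSet_subset_CompatSet : MCARSet X ⊆ CompatSet X := by
  rintro P ⟨hP, hfact⟩
  have hQ : IsProbabilityMeasure (P.map Prod.fst) :=
    Measure.isProbabilityMeasure_map measurable_fst.aemeasurable
  refine ⟨hP, P.map Prod.fst, hQ, fun S hS => ?_⟩
  have hν : P.map Prod.snd {onesOf S} ≠ 0 := by rwa [map_snd_apply_onesOf]
  rw [hfact, condLaw_prod _ _ hν, ← hfact]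
  rfl

lemma exists_MCARSet_map_obsMap_eq {P : Measure ((∀ j, X j) × (Fin d → Bool))}
    (hP : P ∈ CompatSet X) :
    ∃ P₀ ∈ MCARSet X, P₀.map obsMap = P.map obsMap := by
  obtain ⟨hP, Q, hQ, hcompat⟩ := hP
  have : IsProbabilityMeasure (P.map Prod.snd) :=
    Measure.isProbabilityMeasure_map measurable_snd.aemeasurable
  have hpat : ∀ S, (Q.prod (P.map Prod.snd)) {z | z.2 = onesOf S} = P {z | z.2 = onesOf S} :=
    fun S => by
      rw [← map_snd_apply_onesOf, ← map_snd_apply_onesOf, Measure.map_snd_prod, measure_univ,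
        one_smul]
  refine ⟨_, prod_mem_MCARSet Q (P.map Prod.snd), map_obsMap_eq_of_condLaw_eq hpat fun S hS => ?_⟩
  rw [condLaw_prod _ _ ?_, ← hcompat S (hpat S ▸ hS)]
  · rfl
  · rwa [map_snd_apply_onesOf, ← hpat]

theorem statement_0_general {d : ℕ} {X : Fin d → Type*} [∀ j, MeasurableSpace (X j)]
    (n : ℕ) (ψ : (Fin n → ∀ j, Option (X j)) → ℝ) :
    MCARSet X ⊆ CompatSet X ∧
      sSup (expTest n ψ '' CompatSet X) = sSup (expTest n ψ '' MCARSet X) := by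
  refine ⟨MCARSet_subset_CompatSet, congrArg sSup <|
    Set.Subset.antisymm ?_ (Set.image_mono MCARSet_subset_CompatSet)⟩
  rintro _ ⟨P, hP, rfl⟩
  obtain ⟨P₀, hP₀, hmap⟩ := exists_MCARSet_map_obsMap_eq hP
  exact ⟨P₀, hP₀, by rw [expTest, expTest, hmap]⟩

/-- Proposition: compatibility characterises the detectable alternatives to
MCAR: `𝒫₀ ⊆ 𝒫₀'`, and every test has the same supremal rejection probability over `𝒫₀'`
as over `𝒫₀`. -/
theorem statement_0 {d : ℕ} {X : Fin d → Type*} [∀ j, MeasurableSpace (X j)]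
    (n : ℕ) (ψ : (Fin n → ∀ j, Option (X j)) → ℝ)
    (hψ : Measurable ψ) (hψ01 : ∀ z, ψ z ∈ Set.Icc (0 : ℝ) 1) :
    MCARSet X ⊆ CompatSet X ∧
      sSup (expTest n ψ '' CompatSet X) = sSup (expTest n ψ '' MCARSet X) :=
  statement_0_general n ψ
end

section
/- Fix α, β ∈ (0,1) and set C_α = (1/2) ∑_{S∈𝕊} ((|X_S|−1)/n_S)^{1/2} + ((1/2) log(1/α) ∑_{S∈𝕊} 1/n_S)^{1/2}, and analogously C_β. Then: (i) whenever P_𝕊 ∈ 𝒫_𝕊^0, ℙ(R(P̂_𝕊) ≥ C_α) ≤ α; and (ii) whenever P_𝕊 ∈ 𝒫_𝕊 satisfies R(P_𝕊) ≥ C_α + C_β, we have ℙ(R(P̂_𝕊) ≥ C_α) ≥ 1 − β. -/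
open Finset

/-- The space `𝒳_S = ∏_{j ∈ S} [m_j]`. -/
abbrev Cell {d : ℕ} (m : Fin d → ℕ) (S : Finset (Fin d)) : Type :=
  ∀ j : {x : Fin d // x ∈ S}, Fin (m j.1)

/-- The full space `𝒳 = ∏_{j=1}^d [m_j]`. -/
abbrev Full {d : ℕ} (m : Fin d → ℕ) : Type := ∀ j, Fin (m j)

/-- Coordinate projection `x ↦ x_S`. -/
def proj {d : ℕ} (m : Fin d → ℕ) (S : Finset (Fin d)) (x : Full m) : Cell m S :=
  fun j => x j.1

/-- Coordinate projection `𝒳_S → 𝒳_T` for `T ⊆ S`. -/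
def projSub {d : ℕ} (m : Fin d → ℕ) {S T : Finset (Fin d)} (h : T ⊆ S) (z : Cell m S) :
    Cell m T :=
  fun j => z ⟨j.1, h j.2⟩

/-- `p` is a probability mass function. -/
def IsPMF {α : Type*} [Fintype α] (p : α → ℝ) : Prop :=
  (∀ x, 0 ≤ p x) ∧ ∑ x, p x = 1

/-- `p` is a family of probability mass functions indexed by `𝕊`. -/
def IsFamily {d : ℕ} (m : Fin d → ℕ) (𝕊 : Finset (Finset (Fin d)))
    (p : ∀ S : Finset (Fin d), Cell m S → ℝ) : Prop :=
  ∀ S ∈ 𝕊, IsPMF (p S)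

/-- The family `P_𝕊` is compatible: there is a joint pmf on `𝒳` with the given margins. -/
def Compatible {d : ℕ} (m : Fin d → ℕ) (𝕊 : Finset (Finset (Fin d)))
    (p : ∀ S : Finset (Fin d), Cell m S → ℝ) : Prop :=
  ∃ q : Full m → ℝ, IsPMF q ∧
    ∀ S ∈ 𝕊, ∀ y : Cell m S, p S y = ∑ x : Full m, if proj m S x = y then q x else 0

/-- The marginal mass function of `pS` on `𝒳_T`, for `T ⊆ S`. -/
noncomputable def marg {d : ℕ} (m : Fin d → ℕ) {S : Finset (Fin d)} (T : Finset (Fin d)) (h : T ⊆ S)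
    (pS : Cell m S → ℝ) (y : Cell m T) : ℝ :=
  ∑ z : Cell m S, if projSub m h z = y then pS z else 0

/-- The family `P_𝕊` is consistent: overlapping margins agree. -/
def Consistent {d : ℕ} (m : Fin d → ℕ) (𝕊 : Finset (Finset (Fin d)))
    (p : ∀ S : Finset (Fin d), Cell m S → ℝ) : Prop :=
  ∀ S₁ ∈ 𝕊, ∀ S₂ ∈ 𝕊, (S₁ ∩ S₂).Nonempty →
    marg m (S₁ ∩ S₂) inter_subset_left (p S₁) =
      marg m (S₁ ∩ S₂) inter_subset_right (p S₂)

/-- The class `𝒢_𝕊^+`. -/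
def GPlus {d : ℕ} (m : Fin d → ℕ) (𝕊 : Finset (Finset (Fin d)))
    (f : ∀ S : Finset (Fin d), Cell m S → ℝ) : Prop :=
  (∀ S ∈ 𝕊, ∀ y, -1 ≤ f S y) ∧ ∀ x : Full m, 0 ≤ ∑ S ∈ 𝕊, f S (proj m S x)

/-- The linear functional `R(P_𝕊, f_𝕊)`. -/
noncomputable def RL {d : ℕ} (m : Fin d → ℕ) (𝕊 : Finset (Finset (Fin d)))
    (p f : ∀ S : Finset (Fin d), Cell m S → ℝ) : ℝ :=
  -(1 / (𝕊.card : ℝ)) * ∑ S ∈ 𝕊, ∑ y, f S y * p S y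

/-- The incompatibility index `R(P_𝕊)`. -/
noncomputable def Rix {d : ℕ} (m : Fin d → ℕ) (𝕊 : Finset (Finset (Fin d)))
    (p : ∀ S : Finset (Fin d), Cell m S → ℝ) : ℝ :=
  sSup {t | ∃ f, GPlus m 𝕊 f ∧ t = RL m 𝕊 p f}

/-- Total variation distance between two mass functions on a finite space. -/
noncomputable def dTV {α : Type*} [Fintype α] (p q : α → ℝ) : ℝ :=
  sSup {t | ∃ A : Finset α, t = |∑ y ∈ A, (p y - q y)|}

/-- Sample space: independent samples `X_{S,i}`, `i ∈ [n_S]`, for each `S ∈ 𝕊`. -/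
abbrev Samples {d : ℕ} (m : Fin d → ℕ) (𝕊 : Finset (Finset (Fin d)))
    (n : Finset (Fin d) → ℕ) : Type :=
  ∀ S : {T : Finset (Fin d) // T ∈ 𝕊}, Fin (n S.1) → Cell m S.1

/-- Joint mass of a sample under independence, `X_{S,i} ∼ P_S`. -/
noncomputable def jointMass {d : ℕ} (m : Fin d → ℕ) (𝕊 : Finset (Finset (Fin d)))
    (n : Finset (Fin d) → ℕ) (p : ∀ S : Finset (Fin d), Cell m S → ℝ)
    (ω : Samples m 𝕊 n) : ℝ :=
  ∏ S : {T : Finset (Fin d) // T ∈ 𝕊}, ∏ i, p S.1 (ω S i)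

/-- Probability of an event under the joint law of the data. -/
noncomputable def Prob {d : ℕ} (m : Fin d → ℕ) (𝕊 : Finset (Finset (Fin d)))
    (n : Finset (Fin d) → ℕ) (p : ∀ S : Finset (Fin d), Cell m S → ℝ)
    (E : Set (Samples m 𝕊 n)) : ℝ :=
  ∑ ω : Samples m 𝕊 n, E.indicator (jointMass m 𝕊 n p) ω

/-- The empirical family `P̂_𝕊` built from the data (arbitrarily extended off `𝕊`). -/
noncomputable def emp {d : ℕ} (m : Fin d → ℕ) (𝕊 : Finset (Finset (Fin d)))
    (n : Finset (Fin d) → ℕ) (p : ∀ S : Finset (Fin d), Cell m S → ℝ)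
    (ω : Samples m 𝕊 n) : ∀ S : Finset (Fin d), Cell m S → ℝ :=
  fun S y =>
    if h : S ∈ 𝕊 then
      (n S : ℝ)⁻¹ * ((Finset.univ.filter fun i => ω ⟨S, h⟩ i = y).card : ℝ)
    else p S y

/-- The universal critical value `C_α`. -/
noncomputable def Calpha {d : ℕ} (m : Fin d → ℕ) (𝕊 : Finset (Finset (Fin d)))
    (n : Finset (Fin d) → ℕ) (α : ℝ) : ℝ :=
  (1 / 2) * ∑ S ∈ 𝕊, Real.sqrt (((Fintype.card (Cell m S) : ℝ) - 1) / (n S : ℝ)) +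
    Real.sqrt ((1 / 2) * Real.log (1 / α) * ∑ S ∈ 𝕊, 1 / (n S : ℝ))

/-!
The incompatibility index is controlled by the total variation distances `d_TV(P_S, Q_S)`:
capping a witness `f ∈ 𝒢_𝕊^+` at `|𝕊| - 1` keeps it in `𝒢_𝕊^+` and can only increase
`R(P_𝕊, f_𝕊)`, and a capped witness ranges over an interval of length `|𝕊|`, so
`R(P_𝕊) ≤ R(Q_𝕊) + ∑_S d_TV(P_S, Q_S)`. Moreover `R(P_𝕊) ≤ 0` for compatible `P_𝕊`. Hence
rejection under the null, and acceptance under the alternative, force the statistic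
`T = ∑_S d_TV(P̂_S, P_S)` above `C_α`, resp. `C_β`. By Cauchy–Schwarz,
`𝔼 T ≤ (1/2) ∑_S ((|X_S| - 1)/n_S)^{1/2}`, and changing one observation from `P_S` moves `T` by at
most `1/n_S`, so McDiarmid's inequality bounds `ℙ(T ≥ C_γ)` by `γ`. McDiarmid's inequality is
proved for finite product measures from Hoeffding's lemma, one coordinate at a time.
-/

open Real MeasureTheory ProbabilityTheory

theorem IsPMF.sum_mul_exp_le_of_sub_le {κ : Type*} [Fintype κ] {w : κ → ℝ} (hw : IsPMF w)
    {v : κ → ℝ} {c : ℝ} (hv : ∀ x y, v x - v y ≤ c) (l : ℝ) :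
    ∑ x, w x * exp (l * (v x - ∑ y, w y * v y)) ≤ exp (l ^ 2 * c ^ 2 / 8) := by
  let _ : MeasurableSpace κ := ⊤
  have hw' : ∑ x, ENNReal.ofReal (w x) = 1 := by
    rw [← ENNReal.ofReal_sum_of_nonneg fun x _ => hw.1 x, hw.2, ENNReal.ofReal_one]
  set μ := (PMF.ofFintype _ hw').toMeasure
  have hμ (f : κ → ℝ) : ∫ x, f x ∂μ = ∑ x, w x * f x := by
    simp [μ, PMF.integral_eq_sum, ENNReal.toReal_ofReal (hw.1 _)]
  have : Nonempty κ := by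
    by_contra h
    simpa [not_nonempty_iff.mp h] using hw.2
  obtain ⟨x₀, -, hx₀⟩ := exists_min_image univ v univ_nonempty
  have hoeffding := (hasSubgaussianMGF_of_mem_Icc (μ := μ) (a := v x₀) (b := v x₀ + c)
    (measurable_of_countable v).aemeasurable
    (ae_of_all _ fun x => ⟨hx₀ x (mem_univ x), by linarith [hv x x₀]⟩)).mgf_le l
  simp only [mgf, hμ] at hoeffding
  convert hoeffding using 2
  rw [add_sub_cancel_left]
  simp only [div_pow, NNReal.coe_div, NNReal.coe_pow, coe_nnnorm, norm_eq_abs, sq_abs,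
    NNReal.coe_ofNat]
  ring

theorem IsPMF.sum_sqrt_le {γ : Type*} [Fintype γ] {p : γ → ℝ} (hp : IsPMF p) :
    ∑ y, √(p y - p y ^ 2) ≤ √(Fintype.card γ - 1) := by
  have hvar (y : γ) : 0 ≤ p y - p y ^ 2 := by
    have : p y ≤ 1 := hp.2 ▸ single_le_sum (fun x _ => hp.1 x) (mem_univ y)
    nlinarith [hp.1 y]
  have hcs := sq_sum_le_card_mul_sum_sq (s := univ) (f := fun y => √(p y - p y ^ 2))
  have hcs' := sq_sum_le_card_mul_sum_sq (s := univ) (f := p)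
  simp only [Real.sq_sqrt (hvar _), sum_sub_distrib, hp.2, card_univ] at hcs hcs'
  exact Real.le_sqrt_of_sq_le (by nlinarith)

section ProductMeasure

variable {I : Type*} [Fintype I] {κ : I → Type*} [∀ i, Fintype (κ i)]

noncomputable def piMass (w : ∀ i, κ i → ℝ) (ω : ∀ i, κ i) : ℝ := ∏ i, w i (ω i)

theorem piMass_nonneg {w : ∀ i, κ i → ℝ} (hw : ∀ i, IsPMF (w i)) (ω : ∀ i, κ i) :
    0 ≤ piMass w ω :=
  prod_nonneg fun i _ => (hw i).1 (ω i)

variable [DecidableEq I]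

noncomputable def piMean (w : ∀ i, κ i → ℝ) (g : (∀ i, κ i) → ℝ) : ℝ :=
  ∑ ω, piMass w ω * g ω

noncomputable def piProb (w : ∀ i, κ i → ℝ) (E : Set (∀ i, κ i)) : ℝ :=
  ∑ ω, E.indicator (piMass w) ω

def BoundedDifferences (g : (∀ i, κ i) → ℝ) (c : I → ℝ) : Prop :=
  ∀ i ω (x x' : κ i), g (Function.update ω i x) - g (Function.update ω i x') ≤ c i

variable {w : ∀ i, κ i → ℝ}

theorem piMean_prod (h : ∀ i, κ i → ℝ) :
    piMean w (fun ω => ∏ i, h i (ω i)) = ∏ i, ∑ x, w i x * h i x := by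
  simp only [piMean, piMass, Fintype.prod_sum, prod_mul_distrib]

theorem isPMF_piMass (hw : ∀ i, IsPMF (w i)) : IsPMF (piMass w) := by
  refine ⟨piMass_nonneg hw, ?_⟩
  simpa [piMean, (hw _).2] using piMean_prod (w := w) fun _ _ => 1

theorem piProb_mono (hw : ∀ i, IsPMF (w i)) {E F : Set (∀ i, κ i)} (h : E ⊆ F) :
    piProb w E ≤ piProb w F :=
  sum_le_sum fun ω _ => Set.indicator_le_indicator_of_subset h (piMass_nonneg hw) ω

theorem piProb_add_piProb_compl (hw : ∀ i, IsPMF (w i)) (E : Set (∀ i, κ i)) :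
    piProb w E + piProb w Eᶜ = 1 := by
  simp only [piProb, ← sum_add_distrib, Set.indicator_self_add_compl_apply, (isPMF_piMass hw).2]

theorem piMean_mono (hw : ∀ i, IsPMF (w i)) {g₁ g₂ : (∀ i, κ i) → ℝ} (h : ∀ ω, g₁ ω ≤ g₂ ω) :
    piMean w g₁ ≤ piMean w g₂ :=
  sum_le_sum fun ω _ => mul_le_mul_of_nonneg_left (h ω) (piMass_nonneg hw ω)

theorem piMean_sum {ι : Type*} (s : Finset ι) (g : ι → (∀ i, κ i) → ℝ) :
    piMean w (fun ω => ∑ j ∈ s, g j ω) = ∑ j ∈ s, piMean w (g j) := by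
  simp only [piMean, mul_sum]
  exact sum_comm

theorem piMean_const_mul (a : ℝ) (g : (∀ i, κ i) → ℝ) :
    piMean w (fun ω => a * g ω) = a * piMean w g := by
  simp only [piMean, mul_sum, mul_left_comm]

theorem piMean_apply (hw : ∀ i, IsPMF (w i)) (i : I) (f : κ i → ℝ) :
    piMean w (fun ω => f (ω i)) = ∑ x, w i x * f x := by
  set h : ∀ j, κ j → ℝ := Function.update (fun _ _ => 1) i f
  have hi : h i = f := Function.update_self _ _ _
  have hj (j : I) (hj : j ≠ i) : h j = fun _ => 1 := Function.update_of_ne hj _ _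
  have key : (fun ω : ∀ i, κ i => f (ω i)) = fun ω => ∏ j, h j (ω j) := by
    ext ω
    rw [Fintype.prod_eq_single i fun j hji => by simp [hj j hji], hi]
  rw [key, piMean_prod, Fintype.prod_eq_single i fun j hji => by simp [hj j hji, (hw j).2], hi]

theorem piMean_apply_mul_apply (hw : ∀ i, IsPMF (w i)) {i j : I} (hij : i ≠ j) (f : κ i → ℝ)
    (g : κ j → ℝ) :
    piMean w (fun ω => f (ω i) * g (ω j)) = (∑ x, w i x * f x) * ∑ x, w j x * g x := by
  set h : ∀ k, κ k → ℝ := Function.update (Function.update (fun _ _ => 1) i f) j g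
  have hi : h i = f := by simp [h, hij]
  have hj : h j = g := Function.update_self _ _ _
  have hk (k : I) (hk : k ≠ i ∧ k ≠ j) : h k = fun _ => 1 := by simp [h, hk.1, hk.2]
  have key : (fun ω : ∀ i, κ i => f (ω i) * g (ω j)) = fun ω => ∏ k, h k (ω k) := by
    ext ω
    rw [Fintype.prod_eq_mul i j hij fun k hk' => by simp [hk k hk'], hi, hj]
  rw [key, piMean_prod, Fintype.prod_eq_mul i j hij fun k hk' => by simp [hk k hk', (hw k).2],
    hi, hj]

theorem piMean_abs_le_sqrt (hw : ∀ i, IsPMF (w i)) (Z : (∀ i, κ i) → ℝ) :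
    piMean w (fun ω => |Z ω|) ≤ √(piMean w (fun ω => Z ω ^ 2)) := by
  refine (le_abs_self _).trans (abs_le_sqrt ?_)
  have := sum_sq_le_sum_mul_sum_of_sq_le_mul univ (r := fun ω => piMass w ω * |Z ω|)
    (fun ω _ => piMass_nonneg hw ω) (fun ω _ => mul_nonneg (piMass_nonneg hw ω) (sq_nonneg (Z ω)))
    fun ω _ => le_of_eq (by rw [mul_pow, sq_abs]; ring)
  rwa [(isPMF_piMass hw).2, one_mul] at this

theorem piMean_sq_sum (hw : ∀ i, IsPMF (w i)) (s : Finset I) {f : ∀ i, κ i → ℝ}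
    (hf : ∀ i ∈ s, ∑ x, w i x * f i x = 0) :
    piMean w (fun ω => (∑ i ∈ s, f i (ω i)) ^ 2) = ∑ i ∈ s, ∑ x, w i x * f i x ^ 2 := by
  simp only [sq, sum_mul_sum, piMean_sum]
  refine sum_congr rfl fun i hi => ?_
  rw [sum_eq_single_of_mem i hi fun j _ hji => by
    rw [piMean_apply_mul_apply hw hji.symm, hf i hi, zero_mul]]
  exact piMean_apply hw i fun x => f i x * f i x

end ProductMeasure

theorem piMean_fin_cons {N : ℕ} {κ : Fin (N + 1) → Type*} [∀ i, Fintype (κ i)]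
    (w : ∀ i, κ i → ℝ) (F : (∀ i, κ i) → ℝ) :
    piMean w F = piMean (fun i : Fin N => w i.succ) (fun r => ∑ x, w 0 x * F (Fin.cons x r)) := by
  rw [piMean, ← (Fin.consEquiv κ).sum_comp, Fintype.sum_prod_type, sum_comm]
  simp only [piMean, piMass, mul_sum, Fin.prod_univ_succ]
  refine sum_congr rfl fun r _ => sum_congr rfl fun x _ => ?_
  simp [Fin.consEquiv, mul_comm, mul_assoc]

theorem BoundedDifferences.mean_fin_cons {N : ℕ} {κ : Fin (N + 1) → Type*}
    [∀ i, Fintype (κ i)] {w₀ : κ 0 → ℝ} (hw₀ : IsPMF w₀) {g : (∀ i, κ i) → ℝ}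
    {c : Fin (N + 1) → ℝ} (hg : BoundedDifferences g c) :
    BoundedDifferences (fun r => ∑ x, w₀ x * g (Fin.cons x r)) (fun i => c i.succ) := by
  intro i r y y'
  calc ∑ x, w₀ x * g (Fin.cons x (Function.update r i y)) -
        ∑ x, w₀ x * g (Fin.cons x (Function.update r i y'))
      = ∑ x, w₀ x * (g (Function.update (Fin.cons x r) i.succ y) -
          g (Function.update (Fin.cons x r) i.succ y')) := by
        simp only [Fin.cons_update, mul_sub, sum_sub_distrib]
    _ ≤ ∑ x, w₀ x * c i.succ :=
        sum_le_sum fun x _ => mul_le_mul_of_nonneg_left (hg _ _ _ _) (hw₀.1 x)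
    _ = c i.succ := by rw [← sum_mul, hw₀.2, one_mul]

theorem piMean_exp_le_of_boundedDifferences_fin {N : ℕ} {κ : Fin N → Type*}
    [∀ i, Fintype (κ i)] {w : ∀ i, κ i → ℝ} (hw : ∀ i, IsPMF (w i)) {g : (∀ i, κ i) → ℝ}
    {c : Fin N → ℝ} (hg : BoundedDifferences g c) (l : ℝ) :
    piMean w (fun ω => exp (l * (g ω - piMean w g))) ≤ exp (l ^ 2 * (∑ i, c i ^ 2) / 8) := by
  induction N with
  | zero => simp [piMean, piMass]
  | succ N ih =>
    set w' : ∀ i : Fin N, κ i.succ → ℝ := fun i => w i.succ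
    set gbar := fun r : ∀ i : Fin N, κ i.succ => ∑ x, w 0 x * g (Fin.cons x r)
    have hstep (r : ∀ i : Fin N, κ i.succ) :
        ∑ x, w 0 x * exp (l * (g (Fin.cons x r) - gbar r)) ≤ exp (l ^ 2 * c 0 ^ 2 / 8) :=
      (hw 0).sum_mul_exp_le_of_sub_le (fun x y => by simpa using hg 0 (Fin.cons y r) x y) l
    calc piMean w (fun ω => exp (l * (g ω - piMean w g)))
        = piMean w' (fun r => (∑ x, w 0 x * exp (l * (g (Fin.cons x r) - gbar r))) *
              exp (l * (gbar r - piMean w' gbar))) := by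
          rw [piMean_fin_cons, show piMean w g = piMean w' gbar from piMean_fin_cons w g]
          congr 1
          ext r
          rw [sum_mul]
          refine sum_congr rfl fun x _ => ?_
          rw [mul_assoc, ← exp_add]
          ring_nf
      _ ≤ piMean w' (fun r => exp (l ^ 2 * c 0 ^ 2 / 8) * exp (l * (gbar r - piMean w' gbar))) :=
          piMean_mono (fun i => hw i.succ) fun r =>
            mul_le_mul_of_nonneg_right (hstep r) (exp_pos _).le
      _ ≤ exp (l ^ 2 * c 0 ^ 2 / 8) * exp (l ^ 2 * (∑ i : Fin N, c i.succ ^ 2) / 8) := by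
          rw [piMean_const_mul]
          exact mul_le_mul_of_nonneg_left (ih (fun i => hw i.succ) (hg.mean_fin_cons (hw 0)))
            (exp_pos _).le
      _ = exp (l ^ 2 * (∑ i, c i ^ 2) / 8) := by
          rw [← exp_add, Fin.sum_univ_succ]
          ring_nf

section McDiarmid

variable {I : Type*} [Fintype I] [DecidableEq I] {κ : I → Type*} [∀ i, Fintype (κ i)]
  {w : ∀ i, κ i → ℝ}

theorem piMean_comp_piCongrLeft'_symm {J : Type*} [Fintype J] [DecidableEq J] (e : I ≃ J)
    (F : (∀ i, κ i) → ℝ) :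
    piMean (fun j => w (e.symm j)) (fun ω => F ((e.piCongrLeft' κ).symm ω)) = piMean w F := by
  refine Fintype.sum_equiv (e.piCongrLeft' κ).symm _ _ fun ω => ?_
  rw [piMass, piMass, ← e.symm.prod_comp]
  simp

theorem piMean_exp_le_of_boundedDifferences (hw : ∀ i, IsPMF (w i)) {g : (∀ i, κ i) → ℝ}
    {c : I → ℝ} (hg : BoundedDifferences g c) (l : ℝ) :
    piMean w (fun ω => exp (l * (g ω - piMean w g))) ≤ exp (l ^ 2 * (∑ i, c i ^ 2) / 8) := by
  set e := Fintype.equivFin I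
  have hg' : BoundedDifferences (fun ω => g ((e.piCongrLeft' κ).symm ω)) (fun j => c (e.symm j)) :=
    fun j ω x x' => by simpa only [Function.piCongrLeft'_symm_update] using hg _ _ x x'
  have := piMean_exp_le_of_boundedDifferences_fin (fun j => hw (e.symm j)) hg' l
  rwa [piMean_comp_piCongrLeft'_symm, piMean_comp_piCongrLeft'_symm e
    (fun ω => exp (l * (g ω - piMean w g))), e.symm.sum_comp (fun i => c i ^ 2)] at this

theorem piProb_ge_le_of_boundedDifferences (hw : ∀ i, IsPMF (w i)) {g : (∀ i, κ i) → ℝ}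
    {c : I → ℝ} (hg : BoundedDifferences g c) {t : ℝ} (ht : 0 < t) (hc : 0 < ∑ i, c i ^ 2) :
    piProb w {ω | piMean w g + t ≤ g ω} ≤ exp (-2 * t ^ 2 / ∑ i, c i ^ 2) := by
  set l := 4 * t / ∑ i, c i ^ 2
  have hl : 0 ≤ l := by positivity
  calc piProb w {ω | piMean w g + t ≤ g ω}
      ≤ ∑ ω, piMass w ω * exp (l * (g ω - piMean w g) - l * t) := by
        refine sum_le_sum fun ω _ => Set.indicator_le'
          (g := fun ω => piMass w ω * exp (l * (g ω - piMean w g) - l * t)) (fun ω hω => ?_)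
          (fun ω _ => by have := piMass_nonneg hw ω; positivity) ω
        refine le_mul_of_one_le_right (piMass_nonneg hw ω) (one_le_exp ?_)
        have : 0 ≤ l * (g ω - piMean w g - t) :=
          mul_nonneg hl (by linarith [show piMean w g + t ≤ g ω from hω])
        linarith
    _ = exp (-(l * t)) * piMean w (fun ω => exp (l * (g ω - piMean w g))) := by
        simp only [piMean, mul_sum, sub_eq_add_neg _ (l * t), exp_add]
        exact sum_congr rfl fun ω _ => by ring
    _ ≤ exp (-(l * t)) * exp (l ^ 2 * (∑ i, c i ^ 2) / 8) :=
        mul_le_mul_of_nonneg_left (piMean_exp_le_of_boundedDifferences hw hg l) (exp_pos _).le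
    _ = exp (-2 * t ^ 2 / ∑ i, c i ^ 2) := by
        rw [← exp_add]
        congr 1
        simp only [l]
        field_simp
        ring

end McDiarmid

section Empirical

variable {γ : Type*} [DecidableEq γ] {k : ℕ}

noncomputable def empirical (z : Fin k → γ) (y : γ) : ℝ := (k : ℝ)⁻¹ * #{i | z i = y}

theorem empirical_eq_sum (z : Fin k → γ) (y : γ) :
    empirical z y = (k : ℝ)⁻¹ * ∑ i, if z i = y then 1 else 0 := by
  rw [empirical, natCast_card_filter]

variable [Fintype γ]

theorem isPMF_empirical (hk : 0 < k) (z : Fin k → γ) : IsPMF (empirical z) := by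
  refine ⟨fun y => by unfold empirical; positivity, ?_⟩
  simp only [empirical_eq_sum, ← mul_sum]
  rw [sum_comm]
  simp [hk.ne']

theorem sum_abs_empirical_update_sub_le (z : Fin k → γ) (i : Fin k) (x x' : γ) :
    ∑ y, |empirical (Function.update z i x) y - empirical (Function.update z i x') y| ≤ 2 / k := by
  have hdiff (y : γ) :
      empirical (Function.update z i x) y - empirical (Function.update z i x') y =
        (k : ℝ)⁻¹ * ((if x = y then 1 else 0) - if x' = y then 1 else 0) := by
    simp only [empirical_eq_sum, ← mul_sub, sum_update_of_mem (mem_univ i),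
      Function.apply_update (fun _ a => if a = y then (1 : ℝ) else 0)]
    ring
  calc ∑ y, |empirical (Function.update z i x) y - empirical (Function.update z i x') y|
      ≤ ∑ y, (k : ℝ)⁻¹ * ((if x = y then 1 else 0) + if x' = y then 1 else 0) := by
        refine sum_le_sum fun y _ => ?_
        rw [hdiff, abs_mul, abs_of_nonneg (by positivity)]
        gcongr
        split_ifs <;> norm_num
    _ = 2 / k := by
        rw [← mul_sum, sum_add_distrib]
        simp [div_eq_inv_mul, one_add_one_eq_two]

theorem piMean_sq_empirical_sub {p : γ → ℝ} (hp : IsPMF p) (hk : 0 < k) (y : γ) :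
    piMean (fun _ : Fin k => p) (fun z => (empirical z y - p y) ^ 2) = (p y - p y ^ 2) / k := by
  have hcenter (z : Fin k → γ) :
      empirical z y - p y = (k : ℝ)⁻¹ * ∑ i, ((if z i = y then 1 else 0) - p y) := by
    simp only [empirical_eq_sum, sum_sub_distrib, sum_const, card_univ, Fintype.card_fin,
      nsmul_eq_mul]
    field_simp
  have hmean : ∑ x, p x * ((if x = y then 1 else 0) - p y) = 0 := by
    simp [mul_sub, sum_sub_distrib, ← sum_mul, hp.2]
  have hvar : ∑ x, p x * ((if x = y then 1 else 0) - p y) ^ 2 = p y - p y ^ 2 := by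
    have (x : γ) : p x * ((if x = y then 1 else 0) - p y) ^ 2 =
        (if x = y then p x else 0) * (1 - 2 * p y) + p x * p y ^ 2 := by
      split_ifs <;> ring
    simp only [this, sum_add_distrib, ← sum_mul, sum_ite_eq', mem_univ, if_true, hp.2]
    ring
  simp only [hcenter, mul_pow, piMean_const_mul]
  rw [piMean_sq_sum (fun _ => hp) univ (fun _ _ => hmean)]
  simp only [hvar, sum_const, card_univ, Fintype.card_fin, nsmul_eq_mul]
  field_simp

theorem piMean_sum_abs_empirical_sub_le {p : γ → ℝ} (hp : IsPMF p) (hk : 0 < k) :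
    piMean (fun _ : Fin k => p) (fun z => ∑ y, |empirical z y - p y|) ≤
      √((Fintype.card γ - 1) / k) := by
  rw [piMean_sum]
  calc ∑ y, piMean (fun _ : Fin k => p) (fun z => |empirical z y - p y|)
      ≤ ∑ y, √(p y - p y ^ 2) / √k := sum_le_sum fun y _ => by
        rw [← Real.sqrt_div' _ (Nat.cast_nonneg k), ← piMean_sq_empirical_sub hp hk]
        exact piMean_abs_le_sqrt (fun _ => hp) _
    _ ≤ √((Fintype.card γ - 1) / k) := by
        rw [← sum_div, Real.sqrt_div' _ (Nat.cast_nonneg k)]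
        gcongr
        exact hp.sum_sqrt_le

end Empirical

section SigmaCurry

variable {A : Type*} [Fintype A] {ι : A → Type*} [∀ a, Fintype (ι a)] {κ : ∀ a, ι a → Type*}
  (w : ∀ a i, κ a i → ℝ)

theorem piMass_sigma_curry (ν : ∀ σ : Σ a, ι a, κ σ.1 σ.2) :
    piMass (fun a => piMass (w a)) (Sigma.curry ν) =
      piMass (fun σ : Σ a, ι a => w σ.1 σ.2) ν := by
  simp only [piMass, ← univ_sigma_univ, prod_sigma]
  rfl

variable [DecidableEq A] [∀ a, DecidableEq (ι a)] [∀ a i, Fintype (κ a i)]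

theorem piMean_comp_sigma_curry (F : (∀ a i, κ a i) → ℝ) :
    piMean (fun σ : Σ a, ι a => w σ.1 σ.2) (fun ν => F (Sigma.curry ν)) =
      piMean (fun a => piMass (w a)) F :=
  Fintype.sum_equiv (Equiv.piCurry κ) _ _ fun ν => by
    rw [← piMass_sigma_curry]
    rfl

theorem piProb_preimage_sigma_curry (E : Set (∀ a i, κ a i)) :
    piProb (fun σ : Σ a, ι a => w σ.1 σ.2) (Sigma.curry ⁻¹' E) =
      piProb (fun a => piMass (w a)) E :=
  Fintype.sum_equiv (Equiv.piCurry κ) _ _ fun ν => by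
    rw [← funext (piMass_sigma_curry w), ← Set.indicator_comp_right]
    rfl

end SigmaCurry

section EmpiricalDeviation

variable {A : Type*} [Fintype A] [DecidableEq A] {β : A → Type*} [∀ a, Fintype (β a)]
  [∀ a, DecidableEq (β a)] {k : A → ℕ}

noncomputable def empiricalDeviation (q : ∀ a, β a → ℝ) (ω : ∀ a, Fin (k a) → β a) : ℝ :=
  2⁻¹ * ∑ a, ∑ y, |empirical (ω a) y - q a y|

variable {q : ∀ a, β a → ℝ}

theorem piMean_empiricalDeviation_le (hq : ∀ a, IsPMF (q a)) (hk : ∀ a, 0 < k a) :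
    piMean (fun a => piMass fun _ : Fin (k a) => q a) (empiricalDeviation q) ≤
      2⁻¹ * ∑ a, √((Fintype.card (β a) - 1) / k a) := by
  unfold empiricalDeviation
  rw [piMean_const_mul, piMean_sum]
  gcongr with a
  exact (piMean_apply (w := fun b => piMass fun _ : Fin (k b) => q b)
    (fun b => isPMF_piMass fun _ => hq b) a _).trans_le
    (piMean_sum_abs_empirical_sub_le (hq a) (hk a))

theorem boundedDifferences_empiricalDeviation_sigma_curry :
    BoundedDifferences
      (fun ν : ∀ σ : Σ a, Fin (k a), β σ.1 => empiricalDeviation q (Sigma.curry ν))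
      (fun σ => (k σ.1 : ℝ)⁻¹) := by
  rintro ⟨a, i⟩ ν x x'
  set ω : ∀ b, Fin (k b) → β b := Sigma.curry ν
  set D : ∀ b, (Fin (k b) → β b) → ℝ := fun b z => ∑ y, |empirical z y - q b y|
  have hsum (z : Fin (k a) → β a) :
      ∑ b, D b (Function.update ω a z b) = D a z + ∑ b ∈ univ \ {a}, D b (ω b) := by
    rw [← sum_update_of_mem (mem_univ a)]
    exact sum_congr rfl fun b _ => Function.apply_update D ω a z b
  show 2⁻¹ * ∑ b, D b _ - 2⁻¹ * ∑ b, D b _ ≤ _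
  rw [Sigma.curry_update, Sigma.curry_update, hsum, hsum, ← mul_sub, add_sub_add_right_eq_sub]
  calc 2⁻¹ * (D a (Function.update (ω a) i x) - D a (Function.update (ω a) i x'))
      ≤ 2⁻¹ * ∑ y, |empirical (Function.update (ω a) i x) y -
          empirical (Function.update (ω a) i x') y| := by
        rw [← sum_sub_distrib]
        gcongr with y
        exact (abs_sub_abs_le_abs_sub _ _).trans_eq (by rw [sub_sub_sub_cancel_right])
    _ ≤ 2⁻¹ * (2 / k a) := by gcongr; exact sum_abs_empirical_update_sub_le (ω a) i x x'
    _ = (k a : ℝ)⁻¹ := by ring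

theorem piProb_empiricalDeviation_ge_le [Nonempty A] (hq : ∀ a, IsPMF (q a))
    (hk : ∀ a, 0 < k a) {t : ℝ} (ht : 0 < t) :
    piProb (fun a => piMass fun _ : Fin (k a) => q a)
        {ω | 2⁻¹ * ∑ a, √((Fintype.card (β a) - 1) / k a) + t ≤ empiricalDeviation q ω} ≤
      exp (-2 * t ^ 2 / ∑ a, (k a : ℝ)⁻¹) := by
  have hc : ∑ σ : Σ a, Fin (k a), ((k σ.1 : ℝ)⁻¹) ^ 2 = ∑ a, (k a : ℝ)⁻¹ := by
    rw [← univ_sigma_univ, sum_sigma]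
    refine sum_congr rfl fun a _ => ?_
    have : (k a : ℝ) ≠ 0 := (Nat.cast_pos.2 (hk a)).ne'
    simp only [sum_const, card_univ, Fintype.card_fin, nsmul_eq_mul]
    field_simp
  have hpos : 0 < ∑ a, (k a : ℝ)⁻¹ := sum_pos (fun a _ => by simpa using hk a) univ_nonempty
  have hw (σ : Σ a, Fin (k a)) : IsPMF (q σ.1) := hq σ.1
  have hmean := piMean_empiricalDeviation_le hq hk
  rw [← piMean_comp_sigma_curry] at hmean
  rw [← piProb_preimage_sigma_curry (fun a (_ : Fin (k a)) => q a), ← hc]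
  refine (piProb_mono hw fun ν hν => ?_).trans (piProb_ge_le_of_boundedDifferences hw
    (boundedDifferences_empiricalDeviation_sigma_curry (q := q)) ht (hc ▸ hpos))
  exact le_trans (by linarith) (show _ ≤ empiricalDeviation q (Sigma.curry ν) from hν)

end EmpiricalDeviation

section Incompatibility

variable {d : ℕ} {m : Fin d → ℕ} {𝕊 : Finset (Finset (Fin d))}

noncomputable def halfL1Dist (𝕊 : Finset (Finset (Fin d))) (p q : ∀ S, Cell m S → ℝ) : ℝ :=
  2⁻¹ * ∑ S ∈ 𝕊, ∑ y, |p S y - q S y|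

theorem halfL1Dist_comm (p q : ∀ S, Cell m S → ℝ) : halfL1Dist 𝕊 p q = halfL1Dist 𝕊 q p := by
  simp only [halfL1Dist, abs_sub_comm]

theorem RL_le_one (h𝕊 : 𝕊.Nonempty) {q f : ∀ S, Cell m S → ℝ} (hq : IsFamily m 𝕊 q)
    (hf : GPlus m 𝕊 f) : RL m 𝕊 q f ≤ 1 := by
  have hk : (0 : ℝ) < #𝕊 := by exact_mod_cast h𝕊.card_pos
  have hS (S) (hS : S ∈ 𝕊) : -1 ≤ ∑ y, f S y * q S y := by
    calc (-1 : ℝ) = ∑ y, -1 * q S y := by rw [← mul_sum, (hq S hS).2, mul_one]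
      _ ≤ ∑ y, f S y * q S y :=
        sum_le_sum fun y _ => mul_le_mul_of_nonneg_right (hf.1 S hS y) ((hq S hS).1 y)
  have := sum_le_sum hS
  rw [sum_const, nsmul_eq_mul, mul_neg_one] at this
  rw [RL, neg_mul, neg_le, div_mul_eq_mul_div, one_mul, le_div_iff₀ hk]
  linarith

theorem RL_nonpos_of_compatible {p f : ∀ S, Cell m S → ℝ} (hp : Compatible m 𝕊 p)
    (hf : GPlus m 𝕊 f) : RL m 𝕊 p f ≤ 0 := by
  obtain ⟨P, hP, hmarg⟩ := hp
  have hS (S) (hS : S ∈ 𝕊) : ∑ y, f S y * p S y = ∑ x, P x * f S (proj m S x) := by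
    simp only [hmarg S hS, mul_sum, mul_ite, mul_zero]
    rw [sum_comm]
    simp [mul_comm]
  have : 0 ≤ ∑ S ∈ 𝕊, ∑ y, f S y * p S y := by
    rw [sum_congr rfl hS, sum_comm]
    exact sum_nonneg fun x _ => by rw [← mul_sum]; exact mul_nonneg (hP.1 x) (hf.2 x)
  rw [RL, neg_mul, neg_nonpos]
  positivity

noncomputable def truncate (𝕊 : Finset (Finset (Fin d))) (f : ∀ S, Cell m S → ℝ) :
    ∀ S, Cell m S → ℝ :=
  fun S y => min (f S y) (#𝕊 - 1)

theorem gPlus_truncate (h𝕊 : 𝕊.Nonempty) {f : ∀ S, Cell m S → ℝ} (hf : GPlus m 𝕊 f) :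
    GPlus m 𝕊 (truncate 𝕊 f) := by
  have hk : (1 : ℝ) ≤ #𝕊 := by exact_mod_cast h𝕊.card_pos
  refine ⟨fun S hS y => le_min (hf.1 S hS y) (by linarith), fun x => ?_⟩
  by_cases hcap : ∀ S ∈ 𝕊, f S (proj m S x) ≤ #𝕊 - 1
  · calc 0 ≤ ∑ S ∈ 𝕊, f S (proj m S x) := hf.2 x
      _ = ∑ S ∈ 𝕊, truncate 𝕊 f S (proj m S x) :=
        sum_congr rfl fun S hS => (min_eq_left (hcap S hS)).symm
  -- a capped term equals `|𝕊| - 1`, which absorbs the other `|𝕊| - 1` terms, each `≥ -1`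
  push Not at hcap
  obtain ⟨S₀, hS₀, hbig⟩ := hcap
  have hrest : -(#𝕊 - 1 : ℝ) ≤ ∑ S ∈ 𝕊.erase S₀, truncate 𝕊 f S (proj m S x) := by
    have := card_nsmul_le_sum (𝕊.erase S₀) (fun S => truncate 𝕊 f S (proj m S x)) (-1)
      fun S hS => le_min (hf.1 S (mem_of_mem_erase hS) _) (by linarith)
    rw [card_erase_of_mem hS₀, nsmul_eq_mul, Nat.cast_pred h𝕊.card_pos] at this
    linarith
  rw [← add_sum_erase 𝕊 _ hS₀]
  simp only [truncate, min_eq_right hbig.le] at hrest ⊢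
  linarith

theorem RL_le_RL_truncate {q : ∀ S, Cell m S → ℝ} (hq : IsFamily m 𝕊 q)
    (f : ∀ S, Cell m S → ℝ) :
    RL m 𝕊 q f ≤ RL m 𝕊 q (truncate 𝕊 f) := by
  simp only [RL, neg_mul, neg_le_neg_iff]
  gcongr with S hS y
  · exact (hq S hS).1 y
  · exact min_le_left _ _

theorem RL_sub_RL_le_halfL1Dist (h𝕊 : 𝕊.Nonempty) {p q f : ∀ S, Cell m S → ℝ}
    (hp : IsFamily m 𝕊 p) (hq : IsFamily m 𝕊 q)
    (hf : ∀ S ∈ 𝕊, ∀ y, -1 ≤ f S y ∧ f S y ≤ #𝕊 - 1) :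
    RL m 𝕊 p f - RL m 𝕊 q f ≤ halfL1Dist 𝕊 p q := by
  have hk : (0 : ℝ) < #𝕊 := by exact_mod_cast h𝕊.card_pos
  -- `p S - q S` has total mass zero, so `f` may be recentred at the midpoint of `[-1, |𝕊| - 1]`
  set c : ℝ := (#𝕊 - 2) / 2 with hc
  have hS (S) (hS : S ∈ 𝕊) :
      ∑ y, f S y * q S y - ∑ y, f S y * p S y = ∑ y, (c - f S y) * (p S y - q S y) := by
    have : ∑ y, c * (p S y - q S y) = 0 := by
      rw [← mul_sum, sum_sub_distrib, (hp S hS).2, (hq S hS).2, sub_self, mul_zero]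
    simp only [sub_mul, sum_sub_distrib, mul_sub] at this ⊢
    linarith
  have hbound (S) (hS : S ∈ 𝕊) (y : Cell m S) :
      (c - f S y) * (p S y - q S y) ≤ #𝕊 / 2 * |p S y - q S y| := by
    refine (le_abs_self _).trans ?_
    rw [abs_mul]
    gcongr
    rw [abs_le]
    constructor <;> linarith [hf S hS y, hc]
  calc RL m 𝕊 p f - RL m 𝕊 q f
      = (1 / #𝕊) * ∑ S ∈ 𝕊, ∑ y, (c - f S y) * (p S y - q S y) := by
        rw [RL, RL, ← sum_congr rfl hS, sum_sub_distrib]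
        ring
    _ ≤ (1 / #𝕊) * ∑ S ∈ 𝕊, ∑ y, #𝕊 / 2 * |p S y - q S y| :=
        mul_le_mul_of_nonneg_left (sum_le_sum fun S hS => sum_le_sum fun y _ => hbound S hS y)
          (by positivity)
    _ = halfL1Dist 𝕊 p q := by
        simp only [halfL1Dist, ← mul_sum]
        field_simp

theorem bddAbove_RL (h𝕊 : 𝕊.Nonempty) {q : ∀ S, Cell m S → ℝ} (hq : IsFamily m 𝕊 q) :
    BddAbove {t | ∃ f, GPlus m 𝕊 f ∧ t = RL m 𝕊 q f} :=
  ⟨1, by rintro _ ⟨f, hf, rfl⟩; exact RL_le_one h𝕊 hq hf⟩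

theorem Rix_nonneg (h𝕊 : 𝕊.Nonempty) {q : ∀ S, Cell m S → ℝ} (hq : IsFamily m 𝕊 q) :
    0 ≤ Rix m 𝕊 q :=
  le_csSup (bddAbove_RL h𝕊 hq) ⟨fun _ _ => 0, ⟨fun _ _ _ => by norm_num, fun _ => by simp⟩,
    by simp [RL]⟩

theorem Rix_le_zero_of_compatible {p : ∀ S, Cell m S → ℝ} (hp : Compatible m 𝕊 p) :
    Rix m 𝕊 p ≤ 0 :=
  Real.sSup_nonpos fun _ ⟨_, hf, ht⟩ => ht ▸ RL_nonpos_of_compatible hp hf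

theorem Rix_le_Rix_add_halfL1Dist (h𝕊 : 𝕊.Nonempty) {p q : ∀ S, Cell m S → ℝ}
    (hp : IsFamily m 𝕊 p) (hq : IsFamily m 𝕊 q) :
    Rix m 𝕊 p ≤ Rix m 𝕊 q + halfL1Dist 𝕊 p q := by
  refine Real.sSup_le ?_ (add_nonneg (Rix_nonneg h𝕊 hq) (by unfold halfL1Dist; positivity))
  rintro _ ⟨f, hf, rfl⟩
  have hf' := gPlus_truncate h𝕊 hf
  calc RL m 𝕊 p f ≤ RL m 𝕊 p (truncate 𝕊 f) := RL_le_RL_truncate hp f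
    _ ≤ RL m 𝕊 q (truncate 𝕊 f) + halfL1Dist 𝕊 p q := by
      have := RL_sub_RL_le_halfL1Dist h𝕊 hp hq fun S hS y => ⟨hf'.1 S hS y, min_le_right _ _⟩
      linarith
    _ ≤ Rix m 𝕊 q + halfL1Dist 𝕊 p q := by
      gcongr
      exact le_csSup (bddAbove_RL h𝕊 hq) ⟨_, hf', rfl⟩

end Incompatibility

section Sampling

variable {d : ℕ} {m : Fin d → ℕ} {𝕊 : Finset (Finset (Fin d))} {n : Finset (Fin d) → ℕ}
  {p : ∀ S, Cell m S → ℝ}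

theorem Prob_mono (hp : IsFamily m 𝕊 p) {E F : Set (Samples m 𝕊 n)} (h : E ⊆ F) :
    Prob m 𝕊 n p E ≤ Prob m 𝕊 n p F :=
  piProb_mono (w := fun S : 𝕊 => piMass fun _ : Fin (n S) => p S.1)
    (fun S => isPMF_piMass fun _ => hp S.1 S.2) h

theorem Prob_add_Prob_compl (hp : IsFamily m 𝕊 p) (E : Set (Samples m 𝕊 n)) :
    Prob m 𝕊 n p E + Prob m 𝕊 n p Eᶜ = 1 :=
  piProb_add_piProb_compl (w := fun S : 𝕊 => piMass fun _ : Fin (n S) => p S.1)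
    (fun S => isPMF_piMass fun _ => hp S.1 S.2) E

theorem emp_of_mem (ω : Samples m 𝕊 n) {S : Finset (Fin d)} (hS : S ∈ 𝕊) :
    emp m 𝕊 n p ω S = empirical (ω ⟨S, hS⟩) := by
  ext y
  simp [emp, hS, empirical]

theorem isFamily_emp (hn : ∀ S ∈ 𝕊, 0 < n S) (ω : Samples m 𝕊 n) :
    IsFamily m 𝕊 (emp m 𝕊 n p ω) := fun S hS => by
  simpa only [emp_of_mem ω hS] using isPMF_empirical (hn S hS) (ω ⟨S, hS⟩)

theorem halfL1Dist_emp (ω : Samples m 𝕊 n) :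
    halfL1Dist 𝕊 (emp m 𝕊 n p ω) p = empiricalDeviation (fun S : 𝕊 => p S.1) ω := by
  rw [halfL1Dist, empiricalDeviation, ← sum_coe_sort 𝕊]
  simp only [emp_of_mem ω (Subtype.prop _)]

theorem Prob_Calpha_le_halfL1Dist_emp_le (h𝕊 : 𝕊.Nonempty) (hn : ∀ S ∈ 𝕊, 0 < n S)
    (hp : IsFamily m 𝕊 p) {γ : ℝ} (hγ : γ ∈ Set.Ioo (0 : ℝ) 1) :
    Prob m 𝕊 n p {ω | Calpha m 𝕊 n γ ≤ halfL1Dist 𝕊 (emp m 𝕊 n p ω) p} ≤ γ := by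
  have : Nonempty 𝕊 := h𝕊.coe_sort
  set N := ∑ S ∈ 𝕊, 1 / (n S : ℝ)
  have hN : 0 < N := sum_pos (fun S hS => by simpa using hn S hS) h𝕊
  have hlog : 0 < Real.log (1 / γ) := Real.log_pos (by rw [one_div]; exact one_lt_inv_iff₀.2 hγ)
  set t := √((1 / 2) * Real.log (1 / γ) * N)
  have ht : 0 < t := Real.sqrt_pos.2 (by positivity)
  have hC : Calpha m 𝕊 n γ = 2⁻¹ * ∑ S : 𝕊, √((Fintype.card (Cell m S.1) - 1) / n S) + t := by
    rw [Calpha, sum_coe_sort 𝕊 fun S => √((Fintype.card (Cell m S) - 1) / (n S : ℝ))]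
    simp only [t, N, one_div]
  have hN' : ∑ S : 𝕊, (n S : ℝ)⁻¹ = N := by
    simp only [N, one_div]
    exact sum_coe_sort 𝕊 fun S => (n S : ℝ)⁻¹
  calc Prob m 𝕊 n p {ω | Calpha m 𝕊 n γ ≤ halfL1Dist 𝕊 (emp m 𝕊 n p ω) p}
      ≤ exp (-2 * t ^ 2 / ∑ S : 𝕊, (n S : ℝ)⁻¹) := by
        simp only [hC, halfL1Dist_emp]
        exact piProb_empiricalDeviation_ge_le (fun S : 𝕊 => hp S.1 S.2) (fun S => hn S.1 S.2) ht
    _ = γ := by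
        rw [hN', Real.sq_sqrt (by positivity)]
        field_simp
        rw [one_div, Real.log_inv, neg_neg, Real.exp_log hγ.1]

end Sampling

theorem statement_2_general {d : ℕ} (m : Fin d → ℕ)
    (𝕊 : Finset (Finset (Fin d))) (h𝕊 : 𝕊.Nonempty)
    (n : Finset (Fin d) → ℕ) (hn : ∀ S ∈ 𝕊, 0 < n S)
    (p : ∀ S : Finset (Fin d), Cell m S → ℝ) (hp : IsFamily m 𝕊 p)
    (α β : ℝ) (hα : α ∈ Set.Ioo (0 : ℝ) 1) (hβ : β ∈ Set.Ioo (0 : ℝ) 1) :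
    (Compatible m 𝕊 p →
      Prob m 𝕊 n p {ω | Calpha m 𝕊 n α ≤ Rix m 𝕊 (emp m 𝕊 n p ω)} ≤ α) ∧
    (Calpha m 𝕊 n α + Calpha m 𝕊 n β ≤ Rix m 𝕊 p →
      1 - β ≤ Prob m 𝕊 n p {ω | Calpha m 𝕊 n α ≤ Rix m 𝕊 (emp m 𝕊 n p ω)}) := by
  set E := {ω | Calpha m 𝕊 n α ≤ Rix m 𝕊 (emp m 𝕊 n p ω)}
  have hemp := isFamily_emp (p := p) hn
  refine ⟨fun hcompat => ?_, fun hpower => ?_⟩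
  · refine (Prob_mono hp fun ω (hω : Calpha m 𝕊 n α ≤ Rix m 𝕊 (emp m 𝕊 n p ω)) => ?_).trans
      (Prob_Calpha_le_halfL1Dist_emp_le h𝕊 hn hp hα)
    show Calpha m 𝕊 n α ≤ halfL1Dist 𝕊 (emp m 𝕊 n p ω) p
    linarith [Rix_le_Rix_add_halfL1Dist h𝕊 (hemp ω) hp, Rix_le_zero_of_compatible hcompat]
  · have hmiss : Prob m 𝕊 n p Eᶜ ≤ β := by
      refine (Prob_mono hp fun ω (hω : ¬Calpha m 𝕊 n α ≤ Rix m 𝕊 (emp m 𝕊 n p ω)) => ?_).trans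
        (Prob_Calpha_le_halfL1Dist_emp_le h𝕊 hn hp hβ)
      show Calpha m 𝕊 n β ≤ halfL1Dist 𝕊 (emp m 𝕊 n p ω) p
      linarith [Rix_le_Rix_add_halfL1Dist h𝕊 hp (hemp ω),
        halfL1Dist_comm (𝕊 := 𝕊) p (emp m 𝕊 n p ω)]
    linarith [Prob_add_Prob_compl hp E]

/-- Proposition: size and power of the universal test. -/
theorem statement_2 {d : ℕ} (m : Fin d → ℕ) (hm : ∀ j, 0 < m j)
    (𝕊 : Finset (Finset (Fin d))) (h𝕊 : 𝕊.Nonempty) (hSne : ∀ S ∈ 𝕊, S.Nonempty)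
    (n : Finset (Fin d) → ℕ) (hn : ∀ S ∈ 𝕊, 0 < n S)
    (p : ∀ S : Finset (Fin d), Cell m S → ℝ) (hp : IsFamily m 𝕊 p)
    (α β : ℝ) (hα : α ∈ Set.Ioo (0 : ℝ) 1) (hβ : β ∈ Set.Ioo (0 : ℝ) 1) :
    (Compatible m 𝕊 p →
      Prob m 𝕊 n p {ω | Calpha m 𝕊 n α ≤ Rix m 𝕊 (emp m 𝕊 n p ω)} ≤ α) ∧
    (Calpha m 𝕊 n α + Calpha m 𝕊 n β ≤ Rix m 𝕊 p →
      1 - β ≤ Prob m 𝕊 n p {ω | Calpha m 𝕊 n α ≤ Rix m 𝕊 (emp m 𝕊 n p ω)}) :=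
  statement_2_general m 𝕊 h𝕊 n hn p hp α β hα hβ
end

section
/- Identify each family P_𝕊 ∈ 𝒫_𝕊 with the vector of its mass functions in ℝ^{X_𝕊}, where X_𝕊 = {(S, x_S) : S ∈ 𝕊, x_S ∈ X_S}. Then 𝒫_𝕊^0 is a full-dimensional subset of 𝒫_𝕊^cons: for every f ∈ ℝ^{X_𝕊} and c ∈ ℝ, if ∑_{(S,x_S)} f_{(S,x_S)} p_S(x_S) = c for all P_𝕊 ∈ 𝒫_𝕊^0, then ∑_{(S,x_S)} f_{(S,x_S)} p_S(x_S) = c for all P_𝕊 ∈ 𝒫_𝕊^cons; equivalently, the affine spans of 𝒫_𝕊^0 and of 𝒫_𝕊^cons in ℝ^{X_𝕊} coincide. -/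
open Finset

open Function
open scoped BigOperators

/-! Point masses are compatible, so the hypothesis says that `∑_S f_S(x_S) = c` for every
`x ∈ X`. It therefore suffices to show that every consistent family is the family of margins of a
*signed* measure of total mass one on `X`. Work with densities with respect to the uniform
distribution on `X` and with the conditional expectations `E_S` given the coordinates in `S`;
these satisfy `E_S E_T = E_{S ∩ T}`. Adding the sets of `𝕊` one at a time, suppose `E_S r = ρ_S`
for the sets already treated. Then `r + ρ_T - E_T r` has `T`-margin `ρ_T`, and its `S`-margins
change by `E_{S ∩ T} ρ_T - E_{S ∩ T} ρ_S`, which vanishes by consistency. -/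

section CondAvg

variable {ι : Type*} [DecidableEq ι] {α : ι → Type*}

lemma DependsOn.apply_piecewise {s : Finset ι} {G : (∀ i, α i) → ℝ} (hG : DependsOn G s)
    (x z : ∀ i, α i) : G (s.piecewise x z) = G x :=
  hG fun _ hi => s.piecewise_eq_of_mem _ _ hi

variable [Fintype ι] [∀ i, Fintype (α i)]

/-- Conditional expectation under the uniform distribution, given the coordinates in `s`. -/
noncomputable def condAvg (s : Finset ι) : ((∀ i, α i) → ℝ) →ₗ[ℝ] (∀ i, α i) → ℝ where
  toFun F x := 𝔼 z, F (s.piecewise x z)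
  map_add' F G := by ext x; simp [expect_add_distrib]
  map_smul' a F := by ext x; simp [mul_expect]

lemma condAvg_apply (s : Finset ι) (F : (∀ i, α i) → ℝ) (x : ∀ i, α i) :
    condAvg s F x = 𝔼 z, F (s.piecewise x z) := rfl

lemma expect_expect_piecewise (s : Finset ι) (G : (∀ i, α i) → ℝ) :
    𝔼 u, 𝔼 v, G (s.piecewise u v) = 𝔼 z, G z := by
  rcases isEmpty_or_nonempty (∀ i, α i) with hX | hX
  · simp
  let swap : (∀ i, α i) × (∀ i, α i) ≃ (∀ i, α i) × (∀ i, α i) :=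
    Involutive.toPerm (fun uv => (s.piecewise uv.1 uv.2, s.piecewise uv.2 uv.1)) fun uv => by
      ext i <;> by_cases hi : i ∈ s <;> simp [hi]
  calc 𝔼 u, 𝔼 v, G (s.piecewise u v) = 𝔼 uv : (∀ i, α i) × (∀ i, α i), G (swap uv).1 := by
        rw [← expect_product']; rfl
    _ = 𝔼 uv : (∀ i, α i) × (∀ i, α i), G uv.1 := Fintype.expect_equiv swap _ _ fun _ => rfl
    _ = 𝔼 z, G z := by rw [← univ_product_univ, expect_product]; simp

lemma expect_condAvg (s : Finset ι) (F : (∀ i, α i) → ℝ) :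
    𝔼 x, condAvg s F x = 𝔼 x, F x :=
  expect_expect_piecewise s F

lemma condAvg_condAvg (s t : Finset ι) (F : (∀ i, α i) → ℝ) :
    condAvg s (condAvg t F) = condAvg (s ∩ t) F := by
  ext x
  have key : ∀ z w, t.piecewise (s.piecewise x z) w = (s ∩ t).piecewise x (t.piecewise z w) := by
    intro z w
    ext i
    by_cases hs : i ∈ s <;> by_cases ht : i ∈ t <;> simp [hs, ht]
  simp only [condAvg_apply, key]
  exact expect_expect_piecewise t fun v => F ((s ∩ t).piecewise x v)

lemma condAvg_mul_of_dependsOn {s : Finset ι} {G : (∀ i, α i) → ℝ} (hG : DependsOn G s)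
    (F : (∀ i, α i) → ℝ) : condAvg s (G * F) = G * condAvg s F := by
  ext x
  rw [condAvg_apply, Pi.mul_apply, condAvg_apply, mul_expect]
  simp only [Pi.mul_apply, hG.apply_piecewise]

lemma condAvg_of_dependsOn {s : Finset ι} {G : (∀ i, α i) → ℝ} (hG : DependsOn G s) :
    condAvg s G = G := by
  ext x
  rw [condAvg_apply]
  simp only [hG.apply_piecewise]
  exact expect_const ⟨x, mem_univ _⟩ _

lemma expect_mul_condAvg {s : Finset ι} {G : (∀ i, α i) → ℝ} (hG : DependsOn G s)
    (F : (∀ i, α i) → ℝ) : 𝔼 x, G x * condAvg s F x = 𝔼 x, G x * F x := by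
  calc 𝔼 x, G x * condAvg s F x = 𝔼 x, condAvg s (G * F) x := by
        rw [condAvg_mul_of_dependsOn hG]; rfl
    _ = 𝔼 x, G x * F x := expect_condAvg s (G * F)

lemma expect_restrict [∀ i, Nonempty (α i)] (s : Finset ι) (H : (∀ i : s, α i) → ℝ) :
    𝔼 x, H (s.restrict x) = 𝔼 y, H y := by
  let e := Equiv.piEquivPiSubtypeProd (· ∈ s) α
  calc 𝔼 x, H (s.restrict x) = 𝔼 yz : (∀ i : s, α i) × (∀ i : {i // i ∉ s}, α i), H yz.1 :=
        Fintype.expect_equiv e _ _ fun _ => rfl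
    _ = 𝔼 y, H y := by rw [← univ_product_univ, expect_product]; simp

lemma condAvg_eq_card_mul_expect [∀ i, Nonempty (α i)] [∀ i, DecidableEq (α i)]
    (s : Finset ι) (G : (∀ i, α i) → ℝ) (x : ∀ i, α i) :
    condAvg s G x =
      Fintype.card (∀ i : s, α i) * 𝔼 z, if s.restrict z = s.restrict x then G z else 0 := by
  set N : ℝ := (Fintype.card (∀ i : s, α i) : ℝ)
  have hfiber : ∀ u v, N * (if s.restrict (s.piecewise u v) = s.restrict x
      then G (s.piecewise u v) else 0) =
      (if s.restrict u = s.restrict x then N else 0) * G (s.piecewise x v) := by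
    intro u v
    have hres : s.restrict (s.piecewise u v) = s.restrict u := by
      ext i; simp [Finset.restrict]
    rw [hres]
    split_ifs with h
    · have hpw : s.piecewise u v = s.piecewise x v := by
        ext i
        by_cases hi : i ∈ s
        · simpa [hi] using congrFun h ⟨i, hi⟩
        · simp [hi]
      rw [hpw]
    · simp
  calc condAvg s G x = 𝔼 y, (if y = s.restrict x then N else 0) * condAvg s G x :=
        (expect_boole_mul' (fun _ => condAvg s G x) (s.restrict x)).symm
    _ = 𝔼 u, (if s.restrict u = s.restrict x then N else 0) * condAvg s G x :=
        (expect_restrict s fun y => (if y = s.restrict x then N else 0) * condAvg s G x).symm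
    _ = 𝔼 u, 𝔼 v, N * (if s.restrict (s.piecewise u v) = s.restrict x
          then G (s.piecewise u v) else 0) := by
        simp only [hfiber, condAvg_apply, mul_expect]
    _ = N * 𝔼 z, if s.restrict z = s.restrict x then G z else 0 := by
        rw [expect_expect_piecewise s fun z => N * (if s.restrict z = s.restrict x
          then G z else 0), mul_expect]

end CondAvg

section SignedExtension

variable {ι : Type*} [Fintype ι] [DecidableEq ι] {α : ι → Type*} [∀ i, Fintype (α i)]

theorem exists_condAvg_eq_of_condAvg_inter_eq [Nonempty (∀ i, α i)] (𝕊 : Finset (Finset ι))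
    (ρ : Finset ι → (∀ i, α i) → ℝ)
    (hfix : ∀ S ∈ 𝕊, condAvg S (ρ S) = ρ S)
    (hcons : ∀ S ∈ 𝕊, ∀ T ∈ 𝕊, condAvg (S ∩ T) (ρ S) = condAvg (S ∩ T) (ρ T))
    (hmass : ∀ S ∈ 𝕊, 𝔼 x, ρ S x = 1) :
    ∃ r : (∀ i, α i) → ℝ, 𝔼 x, r x = 1 ∧ ∀ S ∈ 𝕊, condAvg S r = ρ S := by
  induction 𝕊 using Finset.induction_on with
  | empty => exact ⟨1, by simp, by simp⟩
  | insert T 𝕊 _ ih =>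
    obtain ⟨r, hr1, hr⟩ := ih (fun S hS => hfix S (mem_insert_of_mem hS))
      (fun S hS T' hT' => hcons S (mem_insert_of_mem hS) T' (mem_insert_of_mem hT'))
      (fun S hS => hmass S (mem_insert_of_mem hS))
    refine ⟨r + ρ T - condAvg T r, ?_, ?_⟩
    · simp only [Pi.add_apply, Pi.sub_apply, expect_sub_distrib,
        expect_add_distrib, expect_condAvg, hr1, hmass T (mem_insert_self T 𝕊)]
      ring
    · intro S hS
      rw [map_sub, map_add, condAvg_condAvg]
      rcases mem_insert.1 hS with rfl | hS
      · rw [inter_self, hfix S hS]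
        abel
      · have hST : condAvg S (ρ T) = condAvg (S ∩ T) (ρ S) := by
          rw [← hfix T (mem_insert_self T 𝕊), condAvg_condAvg,
            hcons S (mem_insert_of_mem hS) T (mem_insert_self T 𝕊)]
        have hSr : condAvg (S ∩ T) r = condAvg (S ∩ T) (ρ S) := by
          rw [← hr S hS, condAvg_condAvg, inter_right_comm, inter_self]
        rw [hr S hS, hST, hSr, add_sub_cancel_right]

end SignedExtension

section Margins

variable {d : ℕ} {m : Fin d → ℕ}

/-- Density, with respect to the uniform distribution on `Full m`, of the extension of `pS` that is
uniform given the coordinates in `S`. -/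
noncomputable def density (S : Finset (Fin d)) (pS : Cell m S → ℝ) (x : Full m) : ℝ :=
  Fintype.card (Cell m S) * pS (proj m S x)

lemma dependsOn_comp_proj (S : Finset (Fin d)) (G : Cell m S → ℝ) :
    DependsOn (fun x : Full m => G (proj m S x)) S :=
  fun _ _ h => congrArg G (funext fun j => h j j.2)

lemma expect_comp_proj (hm : ∀ j, 0 < m j) (S : Finset (Fin d)) (G : Cell m S → ℝ) :
    𝔼 x : Full m, G (proj m S x) = 𝔼 y, G y :=
  have := fun j => Fin.pos_iff_nonempty.1 (hm j)
  expect_restrict (α := fun j => Fin (m j)) S G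

lemma sum_eq_card_mul_expect_comp_proj (hm : ∀ j, 0 < m j) (S : Finset (Fin d))
    (G : Cell m S → ℝ) : ∑ y, G y = Fintype.card (Cell m S) * 𝔼 x : Full m, G (proj m S x) := by
  rw [expect_comp_proj hm, Fintype.card_mul_expect]

lemma condAvg_density (hm : ∀ j, 0 < m j) {S W : Finset (Fin d)} (h : W ⊆ S)
    (pS : Cell m S → ℝ) : condAvg W (density S pS) = density W (marg m W h pS) := by
  have := fun j => Fin.pos_iff_nonempty.1 (hm j)
  ext x
  rw [condAvg_eq_card_mul_expect]
  unfold density marg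
  congr 1
  rw [sum_eq_card_mul_expect_comp_proj hm S, mul_expect]
  refine expect_congr rfl fun z _ => ?_
  rw [show projSub m h (proj m S z) = W.restrict z from rfl,
    show proj m W x = W.restrict x from rfl]
  split_ifs <;> simp

lemma marg_eq_sum_of_eq_empty {S T : Finset (Fin d)} (hT : T = ∅) (h : T ⊆ S)
    (pS : Cell m S → ℝ) (y : Cell m T) : marg m T h pS y = ∑ z, pS z := by
  subst hT
  exact sum_congr rfl fun z _ => if_pos (funext fun j => absurd j.2 (notMem_empty _))

lemma expect_density (hm : ∀ j, 0 < m j) {S : Finset (Fin d)} {pS : Cell m S → ℝ}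
    (hp : IsPMF pS) : 𝔼 x, density S pS x = 1 := by
  unfold density
  rw [← mul_expect, expect_comp_proj hm S pS, Fintype.card_mul_expect, hp.2]

lemma sum_mul_eq_expect_mul_of_condAvg_eq (hm : ∀ j, 0 < m j) {S : Finset (Fin d)}
    (G pS : Cell m S → ℝ) {r : Full m → ℝ} (hr : condAvg S r = density S pS) :
    ∑ y, G y * pS y = 𝔼 x, G (proj m S x) * r x := by
  calc ∑ y, G y * pS y
        = Fintype.card (Cell m S) * 𝔼 x : Full m, G (proj m S x) * pS (proj m S x) :=
        sum_eq_card_mul_expect_comp_proj hm S fun y => G y * pS y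
    _ = 𝔼 x, G (proj m S x) * condAvg S r x := by
        rw [hr, mul_expect]
        exact expect_congr rfl fun x _ => by unfold density; ring
    _ = 𝔼 x, G (proj m S x) * r x := expect_mul_condAvg (dependsOn_comp_proj S G) r

variable {𝕊 : Finset (Finset (Fin d))} {p : ∀ S : Finset (Fin d), Cell m S → ℝ}

lemma Consistent.condAvg_inter_density (hm : ∀ j, 0 < m j) (hp : IsFamily m 𝕊 p)
    (hc : Consistent m 𝕊 p) {S T : Finset (Fin d)} (hS : S ∈ 𝕊) (hT : T ∈ 𝕊) :
    condAvg (S ∩ T) (density S (p S)) = condAvg (S ∩ T) (density T (p T)) := by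
  rw [condAvg_density hm inter_subset_left, condAvg_density hm inter_subset_right]
  rcases (S ∩ T).eq_empty_or_nonempty with hST | hST
  · ext x
    unfold density
    rw [marg_eq_sum_of_eq_empty hST, marg_eq_sum_of_eq_empty hST, (hp S hS).2, (hp T hT).2]
  · rw [hc S hS T hT hST]

theorem Consistent.exists_signed_extension (hm : ∀ j, 0 < m j) (hp : IsFamily m 𝕊 p)
    (hc : Consistent m 𝕊 p) :
    ∃ r : Full m → ℝ, 𝔼 x, r x = 1 ∧ ∀ S ∈ 𝕊, condAvg S r = density S (p S) := by
  have : Nonempty (Full m) := ⟨fun j => ⟨0, hm j⟩⟩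
  exact exists_condAvg_eq_of_condAvg_inter_eq 𝕊 (fun S => density S (p S))
    (fun S _ => condAvg_of_dependsOn (dependsOn_comp_proj S fun y => _ * p S y))
    (fun S hS T hT => hc.condAvg_inter_density hm hp hS hT)
    (fun S hS => expect_density hm (hp S hS))

end Margins

section PointMasses

variable {d : ℕ} {m : Fin d → ℕ}

def diracFamily (x : Full m) (S : Finset (Fin d)) (y : Cell m S) : ℝ :=
  if proj m S x = y then 1 else 0

lemma isFamily_diracFamily (𝕊 : Finset (Finset (Fin d))) (x : Full m) :
    IsFamily m 𝕊 (diracFamily x) :=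
  fun S _ => ⟨fun y => by unfold diracFamily; split_ifs <;> norm_num, by simp [diracFamily]⟩

lemma compatible_diracFamily (𝕊 : Finset (Finset (Fin d))) (x : Full m) :
    Compatible m 𝕊 (diracFamily x) := by
  refine ⟨fun z => if z = x then 1 else 0,
    ⟨fun z => by dsimp only; split_ifs <;> norm_num, by simp⟩, fun S _ y => ?_⟩
  rw [Fintype.sum_eq_single x fun z hz => by simp [hz]]
  simp [diracFamily]

lemma sum_comp_proj_eq_of_forall_compatible {𝕊 : Finset (Finset (Fin d))}
    {f : ∀ S : Finset (Fin d), Cell m S → ℝ} {c : ℝ}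
    (h0 : ∀ p : ∀ S : Finset (Fin d), Cell m S → ℝ,
      IsFamily m 𝕊 p → Compatible m 𝕊 p → ∑ S ∈ 𝕊, ∑ y, f S y * p S y = c)
    (x : Full m) : ∑ S ∈ 𝕊, f S (proj m S x) = c := by
  simpa [diracFamily] using h0 _ (isFamily_diracFamily 𝕊 x) (compatible_diracFamily 𝕊 x)

end PointMasses

theorem statement_3_general {d : ℕ} (m : Fin d → ℕ) (hm : ∀ j, 0 < m j)
    (𝕊 : Finset (Finset (Fin d)))
    (f : ∀ S : Finset (Fin d), Cell m S → ℝ) (c : ℝ)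
    (h0 : ∀ p : ∀ S : Finset (Fin d), Cell m S → ℝ,
      IsFamily m 𝕊 p → Compatible m 𝕊 p → ∑ S ∈ 𝕊, ∑ y, f S y * p S y = c) :
    ∀ p : ∀ S : Finset (Fin d), Cell m S → ℝ,
      IsFamily m 𝕊 p → Consistent m 𝕊 p → ∑ S ∈ 𝕊, ∑ y, f S y * p S y = c := by
  intro p hp hc
  obtain ⟨r, hr1, hr⟩ := hc.exists_signed_extension hm hp
  calc ∑ S ∈ 𝕊, ∑ y, f S y * p S y = ∑ S ∈ 𝕊, 𝔼 x, f S (proj m S x) * r x :=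
        sum_congr rfl fun S hS => sum_mul_eq_expect_mul_of_condAvg_eq hm (f S) (p S) (hr S hS)
    _ = 𝔼 x, (∑ S ∈ 𝕊, f S (proj m S x)) * r x := by
        simp only [sum_mul]
        exact (expect_sum_comm _ _ _).symm
    _ = c := by
        simp only [sum_comp_proj_eq_of_forall_compatible h0, ← mul_expect, hr1, mul_one]

/-- Proposition: full-dimensionality. Any affine functional that is constant on
the set of compatible families is also constant (with the same value) on the set of consistent
families; i.e. `𝒫_𝕊^0` is a full-dimensional subset of `𝒫_𝕊^cons`. -/
theorem statement_3 {d : ℕ} (m : Fin d → ℕ) (hm : ∀ j, 0 < m j)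
    (𝕊 : Finset (Finset (Fin d))) (h𝕊 : 𝕊.Nonempty) (hSne : ∀ S ∈ 𝕊, S.Nonempty)
    (f : ∀ S : Finset (Fin d), Cell m S → ℝ) (c : ℝ)
    (h0 : ∀ p : ∀ S : Finset (Fin d), Cell m S → ℝ,
      IsFamily m 𝕊 p → Compatible m 𝕊 p → ∑ S ∈ 𝕊, ∑ y, f S y * p S y = c) :
    ∀ p : ∀ S : Finset (Fin d), Cell m S → ℝ,
      IsFamily m 𝕊 p → Consistent m 𝕊 p → ∑ S ∈ 𝕊, ∑ y, f S y * p S y = c :=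
  statement_3_general m hm 𝕊 f c h0
end

section
/- For every P_𝕊 ∈ 𝒫_𝕊: (i) the supremum defining R(P_𝕊) is attained, i.e. there exists f_𝕊 ∈ 𝒢_𝕊^+ with R(P_𝕊, f_𝕊) = R(P_𝕊); and (ii) there exist Q_𝕊 ∈ 𝒫_𝕊^0 and T_𝕊 ∈ 𝒫_𝕊 such that P_S = (1 − R(P_𝕊)) Q_S + R(P_𝕊) T_S for all S ∈ 𝕊. -/
/-!
Let `β` be the largest total mass of a nonnegative `μ` on `𝒳` whose margins `μ_S` are dominated
by the `P_S`; then `R(P_𝕊) = 1 - β`. The substitution `g_S = (f_S + 1) / |𝕊|` identifies `𝒢_𝕊^+`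
with the covers of the 0-1 matrix `A` with rows `(S, y)`, columns `x` and entries `[x_S = y]`,
and turns `R(P_𝕊, f_𝕊)` into `1 - ⟨g, P⟩`; so the claim is the duality theorem for the packing
program `max ∑ μ, μ ≥ 0, A μ ≤ P` and the covering program `min ⟨g, P⟩, g ≥ 0, gᵀ A ≥ 1`.
Duality follows from Hahn–Banach separation of `(P, γ)` from the cone `{(A μ + s, ∑ μ) | μ, s ≥ 0}`,
which is closed because `∑ μ` and `A μ + s` bound `μ` and `s`. A minimal cover exists since
truncating a cover at `1` keeps it a cover, leaving a compact set to minimise over. An optimal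
packing `μ` gives the decomposition `Q_S = μ_S / β`, `T_S = (P_S - μ_S) / (1 - β)`.
-/

open Finset

open Matrix

theorem strongDual_apply_prod {κ : Type*} [Fintype κ] [DecidableEq κ]
    (F : StrongDual ℝ ((κ → ℝ) × ℝ)) (v : κ → ℝ) (t : ℝ) :
    F (v, t) = (fun k => F (Pi.single k 1, 0)) ⬝ᵥ v + F (0, 1) * t := by
  have hsplit : (v, t) = ∑ k, v k • ((Pi.single k 1 : κ → ℝ), (0 : ℝ)) + t • (0, 1) := by
    ext k <;> simp [Prod.fst_sum, Prod.snd_sum, Pi.single_apply]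
  rw [hsplit, map_add, map_sum, map_smul]
  simp only [map_smul, smul_eq_mul, dotProduct, mul_comm]

namespace Matrix

variable {ι κ : Type*} [Fintype κ] (A : Matrix κ ι ℝ)

def packingSet [Fintype ι] (b : κ → ℝ) : Set (ι → ℝ) := {μ | 0 ≤ μ ∧ A *ᵥ μ ≤ b}

def coverSet : Set (κ → ℝ) := {g | 0 ≤ g ∧ 1 ≤ g ᵥ* A}

variable {A}

theorem sum_le_dotProduct_of_mem [Fintype ι] {b : κ → ℝ} {μ : ι → ℝ} (hμ : μ ∈ packingSet A b)
    {g : κ → ℝ} (hg : g ∈ coverSet A) : ∑ i, μ i ≤ g ⬝ᵥ b :=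
  calc ∑ i, μ i = 1 ⬝ᵥ μ := by simp [dotProduct]
    _ ≤ (g ᵥ* A) ⬝ᵥ μ := dotProduct_le_dotProduct_of_nonneg_right hg.2 hμ.1
    _ = g ⬝ᵥ (A *ᵥ μ) := (dotProduct_mulVec g A μ).symm
    _ ≤ g ⬝ᵥ b := dotProduct_le_dotProduct_of_nonneg_left hμ.2 hg.1

variable (A) in
def packingMap [Fintype ι] : (ι → ℝ) × (κ → ℝ) →ₗ[ℝ] (κ → ℝ) × ℝ where
  toFun w := (A *ᵥ w.1 + w.2, ∑ i, w.1 i)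
  map_add' v w := by
    ext <;> simp [mulVec_add, sum_add_distrib]
    ring
  map_smul' c w := by ext <;> simp [mulVec_smul, mul_sum]

theorem isClosed_packingMap_image [Fintype ι] (hA : ∀ k i, 0 ≤ A k i) :
    IsClosed (packingMap A '' Set.Ici 0) := by
  refine CompactlyGeneratedSpace.isClosed fun K hK => ?_
  have hcont : Continuous (packingMap A) := LinearMap.continuous_of_finiteDimensional _
  obtain ⟨⟨u, t⟩, hu⟩ := hK.isBounded.bddAbove
  have hbound : Set.Ici 0 ∩ packingMap A ⁻¹' K ⊆ Set.Icc 0 (fun _ => t, u) := by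
    rintro ⟨μ, s⟩ ⟨hw, hwK⟩
    obtain ⟨hμ, hs⟩ := hw
    obtain ⟨hAu, hsum⟩ := hu hwK
    refine ⟨⟨hμ, hs⟩, fun i => ?_, fun k => ?_⟩
    · exact (single_le_sum (fun j _ => hμ j) (mem_univ i)).trans hsum
    · have hAμ : 0 ≤ (A *ᵥ μ) k := sum_nonneg fun j _ => mul_nonneg (hA k j) (hμ j)
      exact (le_add_of_nonneg_left hAμ).trans (hAu k)
  have hcpt : IsCompact (Set.Ici 0 ∩ packingMap A ⁻¹' K) :=
    isCompact_Icc.of_isClosed_subset (isClosed_Ici.inter (hK.isClosed.preimage hcont)) hbound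
  rw [← Set.image_inter_preimage]
  exact (hcpt.image hcont).isClosed

theorem exists_mem_coverSet_dotProduct_lt [Fintype ι] (hA : ∀ k i, 0 ≤ A k i) {b : κ → ℝ}
    (hb : (packingSet A b).Nonempty) {γ : ℝ} (hγ : ∀ μ ∈ packingSet A b, ∑ i, μ i < γ) :
    ∃ g ∈ coverSet A, g ⬝ᵥ b < γ := by
  classical
  have hout : (b, γ) ∉ packingMap A '' Set.Ici 0 := by
    rintro ⟨⟨μ, s⟩, ⟨hμ, hs⟩, hw⟩
    simp only [packingMap, LinearMap.coe_mk, AddHom.coe_mk, Prod.mk.injEq] at hw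
    refine (hγ μ ⟨hμ, fun k => ?_⟩).ne hw.2
    rw [← hw.1]
    exact le_add_of_nonneg_right (hs k)
  obtain ⟨F, u, hFu, huF⟩ := geometric_hahn_banach_closed_point
    ((convex_Ici 0).linear_image _) (isClosed_packingMap_image hA) hout
  have hu : 0 < u := by simpa using hFu 0 ⟨0, Set.self_mem_Ici, map_zero _⟩
  -- `F` is bounded above on a cone, hence nonpositive on it
  have hF : ∀ w, 0 ≤ w → F (packingMap A w) ≤ 0 := by
    intro w hw
    by_contra! hpos
    have := hFu _ ⟨(u / F (packingMap A w)) • w, smul_nonneg (by positivity) hw, rfl⟩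
    rw [map_smul, map_smul, smul_eq_mul, div_mul_cancel₀ _ hpos.ne'] at this
    exact this.false
  set h : κ → ℝ := fun k => F (Pi.single k 1, 0)
  set α : ℝ := F (0, 1)
  have hFvt : ∀ v t, F (v, t) = h ⬝ᵥ v + α * t := strongDual_apply_prod F
  have hh : h ≤ 0 := fun k => by
    simpa [packingMap] using hF (0, Pi.single k 1) (Prod.le_def.2 ⟨le_rfl, by simp⟩)
  have hhA : ∀ i, (h ᵥ* A) i + α ≤ 0 := fun i => by
    have := hF (Pi.single i 1, 0) (Prod.le_def.2 ⟨by simp, le_rfl⟩)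
    change h ⬝ᵥ A.col i + α ≤ 0
    simpa [packingMap, hFvt, mulVec_single_one] using this
  obtain ⟨μ₀, hμ₀⟩ := hb
  have hhb : h ⬝ᵥ b + α * ∑ i, μ₀ i ≤ 0 := by
    have := hF (μ₀, b - A *ᵥ μ₀) (Prod.le_def.2 ⟨hμ₀.1, sub_nonneg.2 hμ₀.2⟩)
    simpa [packingMap, hFvt] using this
  rw [hFvt] at huF
  have hα : 0 < α := by
    by_contra! hα
    nlinarith [hγ μ₀ hμ₀]
  refine ⟨(-α⁻¹) • h, ⟨fun k => ?_, fun i => ?_⟩, ?_⟩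
  · simpa using mul_nonneg_of_nonpos_of_nonpos (neg_nonpos.2 (inv_nonneg.2 hα.le)) (hh k)
  · calc (1 : ι → ℝ) i = -α⁻¹ * -α := by simp [hα.ne']
      _ ≤ -α⁻¹ * (h ᵥ* A) i :=
        mul_le_mul_of_nonpos_left (by linarith [hhA i]) (by simp [hα.le])
      _ = ((-α⁻¹ • h) ᵥ* A) i := by rw [smul_vecMul]; rfl
  · rw [smul_dotProduct, smul_eq_mul, neg_mul, inv_mul_eq_div, neg_lt, lt_div_iff₀ hα]
    linarith

theorem inf_one_mem_coverSet (hA : ∀ k i, A k i = 0 ∨ A k i = 1) {g : κ → ℝ}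
    (hg : g ∈ coverSet A) : g ⊓ 1 ∈ coverSet A := by
  refine ⟨le_inf hg.1 zero_le_one, fun i => ?_⟩
  have hterm : ∀ k, 0 ≤ (g ⊓ 1) k * A k i := fun k =>
    mul_nonneg (le_inf (hg.1 k) zero_le_one) (by rcases hA k i with h | h <;> simp [h])
  by_cases hbig : ∃ k, A k i = 1 ∧ 1 ≤ g k
  · obtain ⟨k, hAk, hgk⟩ := hbig
    calc (1 : ι → ℝ) i = (g ⊓ 1) k * A k i := by simp [hAk, hgk]
      _ ≤ ((g ⊓ 1) ᵥ* A) i := single_le_sum (fun k _ => hterm k) (mem_univ k)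
  · simp only [not_exists, not_and, not_le] at hbig
    have heq : ∀ k, (g ⊓ 1) k * A k i = g k * A k i := fun k => by
      rcases hA k i with h | h
      · simp [h]
      · simp [h, (hbig k h).le]
    calc (1 : ι → ℝ) i ≤ (g ᵥ* A) i := hg.2 i
      _ = ((g ⊓ 1) ᵥ* A) i := (sum_congr rfl fun k _ => heq k).symm

theorem isClosed_coverSet : IsClosed (coverSet A) :=
  isClosed_Ici.inter (isClosed_le continuous_const
    (LinearMap.continuous_of_finiteDimensional (vecMulLinear A)))

theorem exists_isMinOn_coverSet (hA : ∀ k i, A k i = 0 ∨ A k i = 1)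
    (hcol : ∀ i, ∃ k, A k i = 1) {b : κ → ℝ} (hb : 0 ≤ b) :
    ∃ g ∈ coverSet A, IsMinOn (· ⬝ᵥ b) (coverSet A) g := by
  have hone : (1 : κ → ℝ) ∈ coverSet A ∩ Set.Icc 0 1 := by
    refine ⟨⟨zero_le_one, fun i => ?_⟩, zero_le_one, le_rfl⟩
    obtain ⟨k, hk⟩ := hcol i
    calc (1 : ι → ℝ) i = (1 : κ → ℝ) k * A k i := by simp [hk]
      _ ≤ ((1 : κ → ℝ) ᵥ* A) i := single_le_sum (f := fun k => (1 : κ → ℝ) k * A k i)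
        (fun k _ => mul_nonneg zero_le_one (by rcases hA k i with h | h <;> simp [h]))
        (mem_univ k)
  obtain ⟨g, hg, hmin⟩ := (isCompact_Icc.inter_left isClosed_coverSet).exists_isMinOn ⟨1, hone⟩
    (continuous_id.dotProduct continuous_const).continuousOn
  refine ⟨g, hg.1, fun g' hg' => ?_⟩
  have htrunc : g' ⊓ 1 ∈ coverSet A ∩ Set.Icc 0 1 :=
    ⟨inf_one_mem_coverSet hA hg', (inf_one_mem_coverSet hA hg').1, inf_le_right⟩
  exact (hmin htrunc).trans (dotProduct_le_dotProduct_of_nonneg_right inf_le_left hb)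

theorem exists_sum_eq_dotProduct [Fintype ι] (hA : ∀ k i, A k i = 0 ∨ A k i = 1)
    (hcol : ∀ i, ∃ k, A k i = 1) {b : κ → ℝ} (hb : 0 ≤ b) :
    ∃ μ ∈ packingSet A b, ∃ g ∈ coverSet A, ∑ i, μ i = g ⬝ᵥ b := by
  obtain ⟨g, hg, hmin⟩ := exists_isMinOn_coverSet hA hcol hb
  by_contra! hne
  have hlt : ∀ μ ∈ packingSet A b, ∑ i, μ i < g ⬝ᵥ b := fun μ hμ =>
    (sum_le_dotProduct_of_mem hμ hg).lt_of_ne (hne μ hμ g hg)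
  obtain ⟨g', hg', hlt'⟩ := exists_mem_coverSet_dotProduct_lt
    (fun k i => by rcases hA k i with h | h <;> simp [h]) ⟨0, le_rfl, by simpa using hb⟩ hlt
  exact (hmin hg').not_gt hlt'

end Matrix

section MassFunctions

variable {α : Type*} [Fintype α]

theorem exists_isPMF_eq_smul [Nonempty α] {μ : α → ℝ} (hμ : 0 ≤ μ) :
    ∃ q, IsPMF q ∧ μ = (∑ x, μ x) • q := by
  by_cases h0 : ∑ x, μ x = 0
  · refine ⟨fun _ => (Fintype.card α : ℝ)⁻¹, ⟨fun _ => by positivity, ?_⟩, ?_⟩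
    · simp
    · rw [h0, zero_smul]
      exact funext ((sum_eq_zero_iff_of_nonneg fun x _ => hμ x).1 h0 · (mem_univ _))
  · refine ⟨(∑ x, μ x)⁻¹ • μ, ⟨fun x => ?_, ?_⟩, ?_⟩
    · exact mul_nonneg (inv_nonneg.2 (sum_nonneg fun x _ => hμ x)) (hμ x)
    · simp [← mul_sum, h0]
    · rw [smul_smul, mul_inv_cancel₀ h0, one_smul]

theorem exists_isPMF_eq_add_smul {p ν : α → ℝ} (hp : IsPMF p) (hνp : ν ≤ p) :
    ∃ t, IsPMF t ∧ p = ν + (1 - ∑ x, ν x) • t := by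
  have hgap : ∑ x, (p x - ν x) = 1 - ∑ x, ν x := by rw [sum_sub_distrib, hp.2]
  by_cases h1 : ∑ x, ν x = 1
  · refine ⟨p, hp, ?_⟩
    rw [h1, sub_self, zero_smul, add_zero]
    have hzero := (sum_eq_zero_iff_of_nonneg fun x _ => sub_nonneg.2 (hνp x)).1
      (by rw [hgap, h1, sub_self])
    exact funext fun x => sub_eq_zero.1 (hzero x (mem_univ x))
  · have hpos : 0 < 1 - ∑ x, ν x :=
      (hgap ▸ sum_nonneg fun x _ => sub_nonneg.2 (hνp x)).lt_of_ne' (sub_ne_zero.2 (Ne.symm h1))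
    refine ⟨(1 - ∑ x, ν x)⁻¹ • (p - ν), ⟨fun x => ?_, ?_⟩, ?_⟩
    · exact mul_nonneg (inv_nonneg.2 hpos.le) (sub_nonneg.2 (hνp x))
    · simp [← mul_sum, hgap, hpos.ne']
    · rw [smul_smul, mul_inv_cancel₀ hpos.ne', one_smul, add_sub_cancel]

end MassFunctions

section Marginals

variable {d : ℕ} (m : Fin d → ℕ)

noncomputable def margin (μ : Full m → ℝ) (S : Finset (Fin d)) (y : Cell m S) : ℝ :=
  ∑ x, if proj m S x = y then μ x else 0

variable {m}

theorem sum_margin (μ : Full m → ℝ) (S : Finset (Fin d)) : ∑ y, margin m μ S y = ∑ x, μ x := by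
  unfold margin
  rw [sum_comm]
  simp

theorem margin_nonneg {μ : Full m → ℝ} (hμ : 0 ≤ μ) (S : Finset (Fin d)) : 0 ≤ margin m μ S :=
  fun _ => sum_nonneg fun x _ => by split_ifs; exacts [hμ x, le_rfl]

theorem margin_smul (c : ℝ) (μ : Full m → ℝ) (S : Finset (Fin d)) :
    margin m (c • μ) S = c • margin m μ S := by
  ext y
  simp [margin, mul_sum]

theorem isPMF_margin {μ : Full m → ℝ} (hμ : IsPMF μ) (S : Finset (Fin d)) :
    IsPMF (margin m μ S) :=
  ⟨margin_nonneg hμ.1 S, (sum_margin μ S).trans hμ.2⟩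

variable (m) (𝕊 : Finset (Finset (Fin d)))

def incidence : Matrix (Σ S : 𝕊, Cell m S) (Full m) ℝ :=
  Matrix.of fun k x => if proj m k.1 x = k.2 then 1 else 0

def flatten (f : ∀ S : Finset (Fin d), Cell m S → ℝ) : (Σ S : 𝕊, Cell m S) → ℝ :=
  fun k => f k.1 k.2

variable {m 𝕊}

theorem incidence_eq_zero_or_one (k : Σ S : 𝕊, Cell m S) (x : Full m) :
    incidence m 𝕊 k x = 0 ∨ incidence m 𝕊 k x = 1 := by
  simp only [incidence, of_apply]
  split_ifs <;> simp

theorem exists_incidence_eq_one (h𝕊 : 𝕊.Nonempty) (x : Full m) :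
    ∃ k, incidence m 𝕊 k x = 1 :=
  ⟨⟨⟨_, h𝕊.choose_spec⟩, proj m _ x⟩, by simp [incidence]⟩

theorem incidence_mulVec (μ : Full m → ℝ) :
    incidence m 𝕊 *ᵥ μ = flatten m 𝕊 (margin m μ) := by
  ext k
  simp [incidence, flatten, margin, mulVec, dotProduct]

theorem vecMul_incidence (g : (Σ S : 𝕊, Cell m S) → ℝ) (x : Full m) :
    (g ᵥ* incidence m 𝕊) x = ∑ S : 𝕊, g ⟨S, proj m S x⟩ := by
  simp [incidence, vecMul, dotProduct, Fintype.sum_sigma]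

theorem dotProduct_flatten (g : (Σ S : 𝕊, Cell m S) → ℝ) (p : ∀ S : Finset (Fin d), Cell m S → ℝ) :
    g ⬝ᵥ flatten m 𝕊 p = ∑ S : 𝕊, ∑ y, g ⟨S, y⟩ * p S y := by
  simp [flatten, dotProduct, Fintype.sum_sigma]

variable (m 𝕊) in
noncomputable def toCover (f : ∀ S : Finset (Fin d), Cell m S → ℝ) :
    (Σ S : 𝕊, Cell m S) → ℝ :=
  fun k => (f k.1 k.2 + 1) / #𝕊

theorem vecMul_toCover (f : ∀ S : Finset (Fin d), Cell m S → ℝ) (x : Full m) :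
    (toCover m 𝕊 f ᵥ* incidence m 𝕊) x = (∑ S ∈ 𝕊, (f S (proj m S x) + 1)) / #𝕊 := by
  rw [vecMul_incidence, sum_div, ← sum_coe_sort 𝕊]
  rfl

theorem gPlus_iff_toCover_mem_coverSet (h𝕊 : 𝕊.Nonempty) (f : ∀ S : Finset (Fin d), Cell m S → ℝ) :
    GPlus m 𝕊 f ↔ toCover m 𝕊 f ∈ coverSet (incidence m 𝕊) := by
  have hn : (0 : ℝ) < #𝕊 := by exact_mod_cast h𝕊.card_pos
  have hlower : (∀ S ∈ 𝕊, ∀ y, -1 ≤ f S y) ↔ 0 ≤ toCover m 𝕊 f := by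
    simp [Pi.le_def, toCover, div_nonneg_iff, not_le.2 hn, neg_le_iff_add_nonneg, Sigma.forall]
  have hcover : (∀ x, 0 ≤ ∑ S ∈ 𝕊, f S (proj m S x)) ↔ 1 ≤ toCover m 𝕊 f ᵥ* incidence m 𝕊 := by
    simp only [Pi.le_def, Pi.one_apply, vecMul_toCover, le_div_iff₀ hn, one_mul, sum_add_distrib,
      sum_const, nsmul_eq_mul, mul_one, le_add_iff_nonneg_left]
  exact and_congr hlower hcover

theorem RL_eq_one_sub_toCover_dotProduct (h𝕊 : 𝕊.Nonempty) {p : ∀ S : Finset (Fin d), Cell m S → ℝ}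
    (hp : IsFamily m 𝕊 p) (f : ∀ S : Finset (Fin d), Cell m S → ℝ) :
    RL m 𝕊 p f = 1 - toCover m 𝕊 f ⬝ᵥ flatten m 𝕊 p := by
  have hn : (#𝕊 : ℝ) ≠ 0 := by exact_mod_cast h𝕊.card_pos.ne'
  have hterm : ∀ S ∈ 𝕊, ∑ y, (f S y + 1) / #𝕊 * p S y = (∑ y, f S y * p S y + 1) / #𝕊 := by
    intro S hS
    calc ∑ y, (f S y + 1) / #𝕊 * p S y = (∑ y, f S y * p S y + ∑ y, p S y) / #𝕊 := by
          rw [← sum_add_distrib, sum_div]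
          exact sum_congr rfl fun y _ => by ring
      _ = (∑ y, f S y * p S y + 1) / #𝕊 := by rw [(hp S hS).2]
  have hsum : toCover m 𝕊 f ⬝ᵥ flatten m 𝕊 p = (∑ S ∈ 𝕊, ∑ y, f S y * p S y + #𝕊) / #𝕊 :=
    calc toCover m 𝕊 f ⬝ᵥ flatten m 𝕊 p
        = ∑ S ∈ 𝕊, ∑ y, (f S y + 1) / #𝕊 * p S y := by
          rw [dotProduct_flatten]
          exact sum_coe_sort 𝕊 fun S => ∑ y, (f S y + 1) / #𝕊 * p S y
      _ = (∑ S ∈ 𝕊, ∑ y, f S y * p S y + #𝕊) / #𝕊 := by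
          rw [sum_congr rfl hterm, ← sum_div, sum_add_distrib, sum_const, nsmul_one]
  rw [RL, hsum]
  field_simp
  ring

end Marginals

section IncompatibilityIndex

variable {d : ℕ} {m : Fin d → ℕ} {𝕊 : Finset (Finset (Fin d))}
  {p : ∀ S : Finset (Fin d), Cell m S → ℝ}

theorem exists_isGreatest_RL (h𝕊 : 𝕊.Nonempty) (hp : IsFamily m 𝕊 p) :
    ∃ μ : Full m → ℝ, 0 ≤ μ ∧ (∀ S ∈ 𝕊, ∀ y, margin m μ S y ≤ p S y) ∧
      IsGreatest {t | ∃ f, GPlus m 𝕊 f ∧ t = RL m 𝕊 p f} (1 - ∑ x, μ x) := by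
  classical
  obtain ⟨μ, hμ, g, hg, hμg⟩ := exists_sum_eq_dotProduct (b := flatten m 𝕊 p)
    incidence_eq_zero_or_one (exists_incidence_eq_one h𝕊) fun k => (hp k.1 k.1.2).1 k.2
  let f : ∀ S : Finset (Fin d), Cell m S → ℝ :=
    fun S y => if h : S ∈ 𝕊 then #𝕊 * g ⟨⟨S, h⟩, y⟩ - 1 else -1
  have hfg : toCover m 𝕊 f = g := by
    ext ⟨⟨S, hS⟩, y⟩
    have hn : (#𝕊 : ℝ) ≠ 0 := by exact_mod_cast h𝕊.card_pos.ne'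
    simp [toCover, f, hS, hn]
  refine ⟨μ, hμ.1, fun S hS y => ?_,
    ⟨f, (gPlus_iff_toCover_mem_coverSet h𝕊 f).2 (hfg ▸ hg), ?_⟩, ?_⟩
  · simpa [incidence_mulVec, flatten] using hμ.2 ⟨⟨S, hS⟩, y⟩
  · rw [RL_eq_one_sub_toCover_dotProduct h𝕊 hp, hfg, hμg]
  · rintro _ ⟨f', hf', rfl⟩
    rw [RL_eq_one_sub_toCover_dotProduct h𝕊 hp]
    linarith [sum_le_dotProduct_of_mem hμ ((gPlus_iff_toCover_mem_coverSet h𝕊 f').1 hf')]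

theorem exists_compatible_mixture [Nonempty (Full m)] (hp : IsFamily m 𝕊 p) {μ : Full m → ℝ}
    (hμ : 0 ≤ μ) (hμp : ∀ S ∈ 𝕊, ∀ y, margin m μ S y ≤ p S y) :
    ∃ q t, IsFamily m 𝕊 q ∧ Compatible m 𝕊 q ∧ IsFamily m 𝕊 t ∧
      ∀ S ∈ 𝕊, ∀ y, p S y = (∑ x, μ x) * q S y + (1 - ∑ x, μ x) * t S y := by
  obtain ⟨ν, hν, hμν⟩ := exists_isPMF_eq_smul hμ
  have hresidual : ∀ S, ∃ t : Cell m S → ℝ,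
      S ∈ 𝕊 → IsPMF t ∧ p S = margin m μ S + (1 - ∑ x, μ x) • t := by
    intro S
    by_cases hS : S ∈ 𝕊
    · obtain ⟨t, ht, hpt⟩ := exists_isPMF_eq_add_smul (hp S hS) (hμp S hS)
      exact ⟨t, fun _ => ⟨ht, by rwa [sum_margin] at hpt⟩⟩
    · exact ⟨0, fun h => absurd h hS⟩
  choose t ht using hresidual
  refine ⟨margin m ν, t, fun S _ => isPMF_margin hν S, ⟨ν, hν, fun S _ y => rfl⟩,
    fun S hS => (ht S hS).1, fun S hS y => ?_⟩
  have hmargin : margin m μ S = (∑ x, μ x) • margin m ν S := by rw [← margin_smul, ← hμν]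
  rw [(ht S hS).2, hmargin]
  rfl

end IncompatibilityIndex

theorem statement_4_general {d : ℕ} (m : Fin d → ℕ) (hm : ∀ j, 0 < m j)
    (𝕊 : Finset (Finset (Fin d))) (h𝕊 : 𝕊.Nonempty)
    (p : ∀ S : Finset (Fin d), Cell m S → ℝ) (hp : IsFamily m 𝕊 p) :
    (∃ f, GPlus m 𝕊 f ∧ RL m 𝕊 p f = Rix m 𝕊 p) ∧
    (∃ q t : ∀ S : Finset (Fin d), Cell m S → ℝ,
      IsFamily m 𝕊 q ∧ Compatible m 𝕊 q ∧ IsFamily m 𝕊 t ∧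
      ∀ S ∈ 𝕊, ∀ y : Cell m S,
        p S y = (1 - Rix m 𝕊 p) * q S y + Rix m 𝕊 p * t S y) := by
  obtain ⟨μ, hμ, hμp, hgreatest⟩ := exists_isGreatest_RL h𝕊 hp
  have hRix : Rix m 𝕊 p = 1 - ∑ x, μ x := hgreatest.csSup_eq
  obtain ⟨f, hf, hfR⟩ := hgreatest.1
  have : Nonempty (Full m) := ⟨fun j => ⟨0, hm j⟩⟩
  refine ⟨⟨f, hf, by rw [hRix, hfR]⟩, ?_⟩
  rw [hRix, sub_sub_cancel]
  exact exists_compatible_mixture hp hμ hμp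

/-- Proposition: attainment and decomposition. The supremum defining
`R(P_𝕊)` is attained, and `P_𝕊` decomposes as a mixture
`P_𝕊 = (1 - R(P_𝕊))·Q_𝕊 + R(P_𝕊)·T_𝕊` with `Q_𝕊` compatible. -/
theorem statement_4 {d : ℕ} (m : Fin d → ℕ) (hm : ∀ j, 0 < m j)
    (𝕊 : Finset (Finset (Fin d))) (h𝕊 : 𝕊.Nonempty) (hSne : ∀ S ∈ 𝕊, S.Nonempty)
    (p : ∀ S : Finset (Fin d), Cell m S → ℝ) (hp : IsFamily m 𝕊 p) :
    (∃ f, GPlus m 𝕊 f ∧ RL m 𝕊 p f = Rix m 𝕊 p) ∧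
    (∃ q t : ∀ S : Finset (Fin d), Cell m S → ℝ,
      IsFamily m 𝕊 q ∧ Compatible m 𝕊 q ∧ IsFamily m 𝕊 t ∧
      ∀ S ∈ 𝕊, ∀ y : Cell m S,
        p S y = (1 - Rix m 𝕊 p) * q S y + Rix m 𝕊 p * t S y) :=
  statement_4_general m hm 𝕊 h𝕊 p hp
end

section
/- Let d = 3, 𝕊 = {{1,2},{2,3},{1,3}} and X = [r] × [s] × [2] for some r, s ∈ ℕ. Then for every consistent family P_𝕊 ∈ 𝒫_𝕊^cons, R(P_𝕊) = 2 max_{A ⊆ [r], B ⊆ [s]} (−p_{AB•} + p_{A•1} + p_{•B1} − p_{••1})_+, where p_{AB•} = P_{{1,2}}(A × B), p_{A•1} = P_{{1,3}}(A × {1}), p_{•B1} = P_{{2,3}}(B × {1}), p_{••1} = P_{{1,3}}([r] × {1}), and y_+ = max(y,0). -/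
/-!
`R(P_𝕊)` is the value of a linear program over test families `f`; we bound it from both sides.

For `x, y ∈ [0,1]` the family `f₁₂(i,j) = 2 - 3 (xᵢ + yⱼ - 2 xᵢ yⱼ)`,
`f₂₃(j,·) = (2 - 3 yⱼ, 3 yⱼ - 1)`, `f₁₃(i,·) = (2 - 3 xᵢ, 3 xᵢ - 1)` is admissible and, by
consistency, has value `2 M(x, y)`, where `M` is the bilinear extension of
`(A, B) ↦ -p_{AB•} + p_{A•1} + p_{•B1} - p_{••1}`. Taking indicators of a pair maximizing
`M(A, B)`, with maximum `M* ≥ M(∅, [s]) = 0`, gives the lower bound `2 M*`.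

For the upper bound, a nonnegative `q` on `X` whose pairwise margins are dominated by the `P_S`
forces `R(P_𝕊) ≤ 1 - ∑ q`: `∑_S f_S ≥ 0` on the mass of `q`, and `f_S ≥ -1` on the rest. Such a
`q` of mass at least `1 - 2 M*` is built one layer `x₃ = k` at a time, as transportation plans from
`P₁₃(·, k)` to `P₂₃(·, k)` under the capacities `P₁₂`. By max-flow/min-cut the first layer carries
`p_{••1} - M(A, B) ≥ p_{••1} - M*` for some cut `(A, B)`, and the second layer, under the residual
capacities, loses no more than the first.
-/

/-- The family `(P_{{1,2}}, P_{{2,3}}, P_{{1,3}})` of pairwise mass functions on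
`[r] × [s] × [u]` consists of probability mass functions. -/
def ProbTriple (r s u : ℕ) (p12 : Fin r → Fin s → ℝ) (p23 : Fin s → Fin u → ℝ)
    (p13 : Fin r → Fin u → ℝ) : Prop :=
  (∀ i j, 0 ≤ p12 i j) ∧ (∀ j k, 0 ≤ p23 j k) ∧ (∀ i k, 0 ≤ p13 i k) ∧
    (∑ i, ∑ j, p12 i j = 1) ∧ (∑ j, ∑ k, p23 j k = 1) ∧ (∑ i, ∑ k, p13 i k = 1)

/-- Consistency of the family of pairwise margins. -/
def ConsTriple (r s u : ℕ) (p12 : Fin r → Fin s → ℝ) (p23 : Fin s → Fin u → ℝ)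
    (p13 : Fin r → Fin u → ℝ) : Prop :=
  (∀ i, ∑ j, p12 i j = ∑ k, p13 i k) ∧
    (∀ j, ∑ i, p12 i j = ∑ k, p23 j k) ∧
    (∀ k, ∑ j, p23 j k = ∑ i, p13 i k)

/-- Compatibility: existence of a joint pmf on `[r] × [s] × [u]` with the given margins. -/
def CompatTriple (r s u : ℕ) (p12 : Fin r → Fin s → ℝ) (p23 : Fin s → Fin u → ℝ)
    (p13 : Fin r → Fin u → ℝ) : Prop :=
  ∃ q : Fin r → Fin s → Fin u → ℝ,
    (∀ i j k, 0 ≤ q i j k) ∧ (∑ i, ∑ j, ∑ k, q i j k = 1) ∧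
      (∀ i j, p12 i j = ∑ k, q i j k) ∧ (∀ j k, p23 j k = ∑ i, q i j k) ∧
      (∀ i k, p13 i k = ∑ j, q i j k)

/-- The incompatibility index `R(P_𝕊)` for `𝕊 = {{1,2},{2,3},{1,3}}`. -/
noncomputable def RTriple (r s u : ℕ) (p12 : Fin r → Fin s → ℝ) (p23 : Fin s → Fin u → ℝ)
    (p13 : Fin r → Fin u → ℝ) : ℝ :=
  sSup {t | ∃ (f12 : Fin r → Fin s → ℝ) (f23 : Fin s → Fin u → ℝ) (f13 : Fin r → Fin u → ℝ),
    (∀ i j, -1 ≤ f12 i j) ∧ (∀ j k, -1 ≤ f23 j k) ∧ (∀ i k, -1 ≤ f13 i k) ∧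
    (∀ i j k, 0 ≤ f12 i j + f23 j k + f13 i k) ∧
    t = -(1 / 3) * ((∑ i, ∑ j, f12 i j * p12 i j) + (∑ j, ∑ k, f23 j k * p23 j k) +
          (∑ i, ∑ k, f13 i k * p13 i k))}

open Finset Filter Topology

lemma eventually_add_mul_le {u v c : ℝ} (h : u ≤ c) (hv : u = c → v ≤ 0) :
    ∀ᶠ ε in 𝓝[>] (0 : ℝ), u + ε * v ≤ c := by
  rcases h.lt_or_eq with h | h
  · have hlim : Tendsto (fun ε : ℝ => u + ε * v) (𝓝 0) (𝓝 u) :=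
      (by fun_prop : Continuous fun ε : ℝ => u + ε * v).tendsto' 0 u (by simp)
    exact (hlim.mono_left nhdsWithin_le_nhds).eventually_le_const h
  · filter_upwards [self_mem_nhdsWithin] with ε hε
    nlinarith [hv h, Set.mem_Ioi.mp hε]

lemma sum_single_single_apply {α β : Type*} [Fintype α] [DecidableEq α] [DecidableEq β]
    (i : α) (j j' : β) :
    ∑ i', (Pi.single i (Pi.single j (1 : ℝ)) : α → β → ℝ) i' j' = (Pi.single j 1 : β → ℝ) j' := by
  simp [Pi.single_apply, ite_apply]

section Transport

variable {α β : Type*} [Fintype β]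

inductive Reachable (a : α → ℝ) (p m : α → β → ℝ) : α ⊕ β → Prop
  | source {i : α} : ∑ j, m i j < a i → Reachable a p m (.inl i)
  | forward {i : α} {j : β} : Reachable a p m (.inl i) → m i j < p i j → Reachable a p m (.inr j)
  | backward {i : α} {j : β} : Reachable a p m (.inr j) → 0 < m i j → Reachable a p m (.inl i)

/-- First-order conditions for `m + ε • δ` to stay in the box `[0, p]` and within the row bounds
while row `i` carries an extra load `ε * ρ i`. -/
structure IsRowAdmissible (a : α → ℝ) (p m : α → β → ℝ) (ρ : α → ℝ) (δ : α → β → ℝ) :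
    Prop where
  nonneg : ∀ i j, m i j = 0 → 0 ≤ δ i j
  nonpos : ∀ i j, m i j = p i j → δ i j ≤ 0
  row : ∀ i, ∑ j, m i j = a i → ∑ j, δ i j + ρ i ≤ 0

variable {a : α → ℝ} {b : β → ℝ} {p m δ : α → β → ℝ}

lemma IsRowAdmissible.add_single [DecidableEq α] [DecidableEq β] {i : α} {j : β}
    (hδ : IsRowAdmissible a p m (Pi.single i 1) δ) (hlt : m i j < p i j) :
    IsRowAdmissible a p m 0 (δ + Pi.single i (Pi.single j 1)) := by
  refine ⟨fun i' j' h => ?_, fun i' j' h => ?_, fun i' h => ?_⟩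
  · have := hδ.nonneg i' j' h
    simp only [Pi.add_apply, Pi.single_apply, ite_apply, Pi.zero_apply]
    split_ifs <;> simp_all
    linarith
  · have := hδ.nonpos i' j' h
    simp only [Pi.add_apply, Pi.single_apply, ite_apply, Pi.zero_apply]
    split_ifs <;> simp_all
  · have := hδ.row i' h
    simp only [Pi.add_apply, sum_add_distrib, Pi.single_apply, ite_apply, Pi.zero_apply] at this ⊢
    split_ifs at this ⊢ <;> simp_all

lemma IsRowAdmissible.sub_single [DecidableEq α] [DecidableEq β] {i : α} {j : β}
    (hδ : IsRowAdmissible a p m 0 δ) (hpos : 0 < m i j) :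
    IsRowAdmissible a p m (Pi.single i 1) (δ - Pi.single i (Pi.single j 1)) := by
  refine ⟨fun i' j' h => ?_, fun i' j' h => ?_, fun i' h => ?_⟩
  · have := hδ.nonneg i' j' h
    simp only [Pi.sub_apply, Pi.single_apply, ite_apply, Pi.zero_apply]
    split_ifs <;> simp_all
  · have := hδ.nonpos i' j' h
    simp only [Pi.sub_apply, Pi.single_apply, ite_apply, Pi.zero_apply]
    split_ifs <;> simp_all
    linarith
  · have := hδ.row i' h
    simp only [Pi.sub_apply, sum_sub_distrib, Pi.single_apply, ite_apply, Pi.zero_apply] at this ⊢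
    split_ifs at this ⊢ <;> simp_all

variable [Fintype α]

structure IsSubTransport (a : α → ℝ) (b : β → ℝ) (p m : α → β → ℝ) : Prop where
  nonneg : ∀ i j, 0 ≤ m i j
  le_cap : ∀ i j, m i j ≤ p i j
  row_le : ∀ i, ∑ j, m i j ≤ a i
  col_le : ∀ j, ∑ i, m i j ≤ b j

/-- For `x = 𝟙_A`, `y = 𝟙_B`: the capacity of the cut whose source side holds the rows in `A`
and the columns outside `B`. -/
def cutCapacity (a : α → ℝ) (b : β → ℝ) (p : α → β → ℝ) (x : α → ℝ) (y : β → ℝ) : ℝ :=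
  ∑ i, (1 - x i) * a i + ∑ j, (1 - y j) * b j + ∑ i, ∑ j, x i * y j * p i j

lemma isCompact_setOf_isSubTransport (a : α → ℝ) (b : β → ℝ) (p : α → β → ℝ) :
    IsCompact {m | IsSubTransport a b p m} := by
  have hset : {m | IsSubTransport a b p m} =
      Set.Icc 0 p ∩ (⋂ i, {m | ∑ j, m i j ≤ a i}) ∩ ⋂ j, {m | ∑ i, m i j ≤ b j} := by
    ext m
    simp only [Set.mem_ofPred_eq, Set.mem_inter_iff, Set.mem_Icc, Set.mem_iInter, Pi.le_def,
      Pi.zero_apply]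
    exact ⟨fun h => ⟨⟨⟨h.nonneg, h.le_cap⟩, h.row_le⟩, h.col_le⟩,
      fun ⟨⟨⟨h0, hp⟩, hr⟩, hc⟩ => ⟨h0, hp, hr, hc⟩⟩
  rw [hset]
  exact (isCompact_Icc.inter_right (isClosed_iInter fun i => isClosed_le (by fun_prop)
    continuous_const)).inter_right (isClosed_iInter fun j => isClosed_le (by fun_prop)
    continuous_const)

lemma exists_forall_isSubTransport_sum_le (ha : ∀ i, 0 ≤ a i) (hb : ∀ j, 0 ≤ b j)
    (hp : ∀ i j, 0 ≤ p i j) :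
    ∃ m, IsSubTransport a b p m ∧
      ∀ m', IsSubTransport a b p m' → ∑ i, ∑ j, m' i j ≤ ∑ i, ∑ j, m i j := by
  have hzero : IsSubTransport a b p 0 :=
    ⟨fun _ _ => le_rfl, hp, fun i => by simp [ha i], fun j => by simp [hb j]⟩
  obtain ⟨m, hm, hmax⟩ := (isCompact_setOf_isSubTransport a b p).exists_isMaxOn ⟨0, hzero⟩
    (f := fun m : α → β → ℝ => ∑ i, ∑ j, m i j) (Continuous.continuousOn (by fun_prop))
  exact ⟨m, hm, fun m' hm' => hmax hm'⟩

lemma sum_eq_cutCapacity {x : α → ℝ} {y : β → ℝ}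
    (hrow : ∀ i, (1 - x i) * (∑ j, m i j - a i) = 0)
    (hcol : ∀ j, (1 - y j) * (∑ i, m i j - b j) = 0)
    (hcap : ∀ i j, x i * y j * (m i j - p i j) = 0)
    (hzero : ∀ i j, (1 - x i) * (1 - y j) * m i j = 0) :
    ∑ i, ∑ j, m i j = cutCapacity a b p x y := by
  have hrow' : ∑ i, ∑ j, (1 - x i) * m i j = ∑ i, (1 - x i) * a i :=
    sum_congr rfl fun i _ => by rw [← mul_sum]; linear_combination hrow i
  have hcap' : ∑ i, ∑ j, x i * y j * m i j = ∑ i, ∑ j, x i * y j * p i j :=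
    sum_congr rfl fun i _ => sum_congr rfl fun j _ => by linear_combination hcap i j
  have hcol' : ∑ i, ∑ j, (1 - y j) * m i j = ∑ j, (1 - y j) * b j := by
    rw [sum_comm]
    exact sum_congr rfl fun j _ => by rw [← mul_sum]; linear_combination hcol j
  have hzero' : ∑ i, ∑ j, (1 - x i) * (1 - y j) * m i j = 0 :=
    sum_eq_zero fun i _ => sum_eq_zero fun j _ => hzero i j
  calc ∑ i, ∑ j, m i j
      = ∑ i, ∑ j, ((1 - x i) * m i j + x i * y j * m i j + (1 - y j) * m i j -
          (1 - x i) * (1 - y j) * m i j) :=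
        sum_congr rfl fun i _ => sum_congr rfl fun j _ => by ring
    _ = cutCapacity a b p x y := by
        simp only [sum_add_distrib, sum_sub_distrib, hrow', hcap', hcol', hzero', cutCapacity]
        ring

lemma IsSubTransport.eventually_add_smul (hm : IsSubTransport a b p m)
    (hδ : IsRowAdmissible a p m 0 δ) (hcol : ∀ j, ∑ i, m i j = b j → ∑ i, δ i j ≤ 0) :
    ∀ᶠ ε in 𝓝[>] (0 : ℝ), IsSubTransport a b p (m + ε • δ) := by
  have hrow (ε : ℝ) (i : α) : ∑ j, (m + ε • δ) i j = ∑ j, m i j + ε * ∑ j, δ i j := by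
    simp [sum_add_distrib, mul_sum]
  have hcol' (ε : ℝ) (j : β) : ∑ i, (m + ε • δ) i j = ∑ i, m i j + ε * ∑ i, δ i j := by
    simp [sum_add_distrib, mul_sum]
  have h0 := eventually_all.2 fun i => eventually_all.2 fun j =>
    eventually_add_mul_le (u := -m i j) (v := -δ i j) (c := 0) (by linarith [hm.nonneg i j])
      fun h => by linarith [hδ.nonneg i j (by linarith)]
  have hp := eventually_all.2 fun i => eventually_all.2 fun j =>
    eventually_add_mul_le (hm.le_cap i j) (hδ.nonpos i j)
  have ha := eventually_all.2 fun i =>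
    eventually_add_mul_le (hm.row_le i) fun h => by simpa using hδ.row i h
  have hb := eventually_all.2 fun j => eventually_add_mul_le (hm.col_le j) (hcol j)
  filter_upwards [h0, hp, ha, hb] with ε h0 hp ha hb
  refine ⟨fun i j => ?_, fun i j => ?_, fun i => ?_, fun j => ?_⟩
  · simp only [Pi.add_apply, Pi.smul_apply, smul_eq_mul]; linarith [h0 i j]
  · simpa using hp i j
  · rw [hrow]; exact ha i
  · rw [hcol']; exact hb j

/-- Augmenting along a residual path to `x` frees one unit of row `x`, or pushes one unit into
column `x`, leaving all other column sums unchanged. -/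
lemma Reachable.exists_isRowAdmissible [DecidableEq α] [DecidableEq β] {x : α ⊕ β}
    (hx : Reachable a p m x) :
    ∃ δ, IsRowAdmissible a p m (x.elim (fun i => Pi.single i (1 : ℝ)) fun _ => 0) δ ∧
      ∀ j, ∑ i, δ i j = x.elim (fun _ => 0) (fun j => Pi.single j (1 : ℝ)) j := by
  induction hx with
  | @source i hi =>
    refine ⟨0, ⟨fun _ _ _ => le_rfl, fun _ _ _ => le_rfl, fun i' hi' => ?_⟩, by simp⟩
    rcases eq_or_ne i' i with rfl | hne
    · exact absurd hi' hi.ne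
    · simp [hne]
  | @forward i j _ hlt ih =>
    obtain ⟨δ, hδ, hcol⟩ := ih
    refine ⟨_, hδ.add_single hlt, fun j' => ?_⟩
    simp [sum_add_distrib, hcol, sum_single_single_apply]
  | @backward i j _ hpos ih =>
    obtain ⟨δ, hδ, hcol⟩ := ih
    refine ⟨_, hδ.sub_single hpos, fun j' => ?_⟩
    simp [sum_sub_distrib, hcol, sum_single_single_apply]

/-- A maximal transport saturates every reachable column (else augment), so the reachable rows
and the unreachable columns satisfy complementary slackness. -/
theorem exists_isSubTransport_sum_eq_cutCapacity (ha : ∀ i, 0 ≤ a i) (hb : ∀ j, 0 ≤ b j)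
    (hp : ∀ i j, 0 ≤ p i j) :
    ∃ m, IsSubTransport a b p m ∧ ∃ (A : Finset α) (B : Finset β),
      ∑ i, ∑ j, m i j = cutCapacity a b p ((A : Set α).indicator 1) ((B : Set β).indicator 1) := by
  classical
  obtain ⟨m, hm, hmax⟩ := exists_forall_isSubTransport_sum_le ha hb hp
  have hsat : ∀ j, Reachable a p m (.inr j) → ∑ i, m i j = b j := by
    intro j hj
    by_contra hne
    obtain ⟨δ, hδ, hcol⟩ := hj.exists_isRowAdmissible
    have hcol_le : ∀ j', ∑ i, m i j' = b j' → ∑ i, δ i j' ≤ 0 := by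
      intro j' hj'
      rw [hcol j']
      rcases eq_or_ne j' j with rfl | hne'
      · exact absurd hj' hne
      · simp [hne']
    obtain ⟨ε, hfeas, hε⟩ := ((hm.eventually_add_smul hδ hcol_le).and self_mem_nhdsWithin).exists
    have htotal : ∑ i, ∑ j, (m + ε • δ) i j = ∑ i, ∑ j, m i j + ε := by
      have : ∑ i, ∑ j, δ i j = 1 := by
        rw [sum_comm]
        simp [hcol]
      simp [sum_add_distrib, ← mul_sum, this]
    linarith [hmax _ hfeas]
  set A := univ.filter fun i => Reachable a p m (.inl i)
  set B := univ.filter fun j => ¬ Reachable a p m (.inr j)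
  refine ⟨m, hm, A, B, sum_eq_cutCapacity (fun i => ?_) (fun j => ?_) (fun i j => ?_)
    (fun i j => ?_)⟩
  · by_cases hi : Reachable a p m (.inl i)
    · simp [A, hi]
    · simp [A, hi, le_antisymm (hm.row_le i) (not_lt.1 fun h => hi (.source h))]
  · by_cases hj : Reachable a p m (.inr j)
    · simp [B, hj, hsat j hj]
    · simp [B, hj]
  · by_cases hi : Reachable a p m (.inl i) <;> by_cases hj : Reachable a p m (.inr j)
    · simp [B, hj]
    · simp [le_antisymm (hm.le_cap i j) (not_lt.1 fun h => hj (.forward hi h))]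
    · simp [A, hi]
    · simp [A, hi]
  · by_cases hi : Reachable a p m (.inl i) <;> by_cases hj : Reachable a p m (.inr j)
    · simp [A, hi]
    · simp [A, hi]
    · simp [le_antisymm (not_lt.1 fun h => hi (.backward hj h)) (hm.nonneg i j)]
    · simp [B, hj]

lemma IsSubTransport.le_cutCapacity_residual (hm : IsSubTransport a b p m) {x : α → ℝ} {y : β → ℝ}
    (hx : ∀ i, x i ∈ Set.Icc 0 1) (hy : ∀ j, y j ∈ Set.Icc 0 1) :
    ∑ i, ∑ j, p i j - ∑ i, a i - ∑ j, b j + ∑ i, ∑ j, m i j ≤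
      cutCapacity (fun i => ∑ j, p i j - a i) (fun j => ∑ i, p i j - b j) (p - m) x y := by
  -- the difference of the two sides is `hgap + hrow + hcol`
  have hgap : 0 ≤ ∑ i, ∑ j, (1 - x i) * (1 - y j) * (p i j - m i j) :=
    sum_nonneg fun i _ => sum_nonneg fun j _ => mul_nonneg (mul_nonneg
      (sub_nonneg.2 (hx i).2) (sub_nonneg.2 (hy j).2)) (sub_nonneg.2 (hm.le_cap i j))
  have hrow : 0 ≤ ∑ i, x i * (a i - ∑ j, m i j) :=
    sum_nonneg fun i _ => mul_nonneg (hx i).1 (sub_nonneg.2 (hm.row_le i))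
  have hcol : 0 ≤ ∑ j, y j * (b j - ∑ i, m i j) :=
    sum_nonneg fun j _ => mul_nonneg (hy j).1 (sub_nonneg.2 (hm.col_le j))
  have hpt : ∑ i, ∑ j, ((1 - x i) * p i j + (1 - y j) * p i j + x i * y j * (p i j - m i j)
      - p i j - m i j - (1 - x i) * (1 - y j) * (p i j - m i j) + x i * m i j + y j * m i j)
      = 0 := sum_eq_zero fun i _ => sum_eq_zero fun j _ => by ring
  have e1 : ∑ i, (1 - x i) * (∑ j, p i j - a i) =
      ∑ i, ∑ j, (1 - x i) * p i j - ∑ i, (1 - x i) * a i := by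
    simp only [mul_sub, mul_sum, sum_sub_distrib]
  have e2 : ∑ j, (1 - y j) * (∑ i, p i j - b j) =
      ∑ i, ∑ j, (1 - y j) * p i j - ∑ j, (1 - y j) * b j := by
    rw [sum_comm (f := fun i j => (1 - y j) * p i j)]
    simp only [mul_sub, mul_sum, sum_sub_distrib]
  have e3 : ∑ i, x i * (a i - ∑ j, m i j) = ∑ i, x i * a i - ∑ i, ∑ j, x i * m i j := by
    simp only [mul_sub, mul_sum, sum_sub_distrib]
  have e4 : ∑ j, y j * (b j - ∑ i, m i j) = ∑ j, y j * b j - ∑ i, ∑ j, y j * m i j := by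
    rw [sum_comm (f := fun i j => y j * m i j)]
    simp only [mul_sub, mul_sum, sum_sub_distrib]
  have e5 : ∑ i, (1 - x i) * a i = ∑ i, a i - ∑ i, x i * a i := by
    simp only [sub_mul, one_mul, sum_sub_distrib]
  have e6 : ∑ j, (1 - y j) * b j = ∑ j, b j - ∑ j, y j * b j := by
    simp only [sub_mul, one_mul, sum_sub_distrib]
  simp only [sum_add_distrib, sum_sub_distrib] at hpt
  simp only [cutCapacity, Pi.sub_apply]
  rw [e1, e2]
  rw [e3] at hrow
  rw [e4] at hcol
  linarith

end Transport

section SubCoupling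

variable {α β γ : Type*} [Fintype α] [Fintype β] [Fintype γ]

structure IsSubCoupling (q : α → β → γ → ℝ) (p12 : α → β → ℝ) (p23 : β → γ → ℝ)
    (p13 : α → γ → ℝ) : Prop where
  nonneg : ∀ i j k, 0 ≤ q i j k
  le12 : ∀ i j, ∑ k, q i j k ≤ p12 i j
  le23 : ∀ j k, ∑ i, q i j k ≤ p23 j k
  le13 : ∀ i k, ∑ j, q i j k ≤ p13 i k

lemma sum_sum_mul_le_of_neg_one_le {ι κ : Type*} [Fintype ι] [Fintype κ] {f c p : ι → κ → ℝ}
    (hf : ∀ i j, -1 ≤ f i j) (hc : ∀ i j, c i j ≤ p i j) :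
    ∑ i, ∑ j, f i j * c i j ≤
      ∑ i, ∑ j, f i j * p i j + (∑ i, ∑ j, p i j - ∑ i, ∑ j, c i j) := by
  have := sum_le_sum fun i (_ : i ∈ univ) => sum_le_sum fun j (_ : j ∈ univ) =>
    show f i j * c i j ≤ f i j * p i j + (p i j - c i j) by
      nlinarith [mul_nonneg (neg_le_iff_add_nonneg.1 (hf i j)) (sub_nonneg.2 (hc i j))]
  simpa only [sum_add_distrib, sum_sub_distrib] using this

variable {q : α → β → γ → ℝ} {p12 f12 : α → β → ℝ} {p23 f23 : β → γ → ℝ} {p13 f13 : α → γ → ℝ}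

lemma sum_mul_add_add_eq_sum_margins :
    ∑ i, ∑ j, ∑ k, q i j k * (f12 i j + f23 j k + f13 i k) =
      ∑ i, ∑ j, f12 i j * ∑ k, q i j k + ∑ j, ∑ k, f23 j k * ∑ i, q i j k +
        ∑ i, ∑ k, f13 i k * ∑ j, q i j k := by
  have h12 : ∑ i, ∑ j, ∑ k, q i j k * f12 i j = ∑ i, ∑ j, f12 i j * ∑ k, q i j k :=
    sum_congr rfl fun i _ => sum_congr rfl fun j _ => by simp only [mul_sum, mul_comm]
  have h23 : ∑ i, ∑ j, ∑ k, q i j k * f23 j k = ∑ j, ∑ k, f23 j k * ∑ i, q i j k := by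
    rw [sum_comm]
    exact sum_congr rfl fun j _ => by rw [sum_comm]; simp only [mul_sum, mul_comm]
  have h13 : ∑ i, ∑ j, ∑ k, q i j k * f13 i k = ∑ i, ∑ k, f13 i k * ∑ j, q i j k :=
    sum_congr rfl fun i _ => by rw [sum_comm]; simp only [mul_sum, mul_comm]
  simp only [mul_add, sum_add_distrib, h12, h23, h13]

lemma IsSubCoupling.objective_le (hq : IsSubCoupling q p12 p23 p13)
    (h12 : ∑ i, ∑ j, p12 i j = 1) (h23 : ∑ j, ∑ k, p23 j k = 1) (h13 : ∑ i, ∑ k, p13 i k = 1)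
    (hf12 : ∀ i j, -1 ≤ f12 i j) (hf23 : ∀ j k, -1 ≤ f23 j k) (hf13 : ∀ i k, -1 ≤ f13 i k)
    (hf : ∀ i j k, 0 ≤ f12 i j + f23 j k + f13 i k) :
    -(1 / 3) * (∑ i, ∑ j, f12 i j * p12 i j + ∑ j, ∑ k, f23 j k * p23 j k +
      ∑ i, ∑ k, f13 i k * p13 i k) ≤ 1 - ∑ i, ∑ j, ∑ k, q i j k := by
  have e12 := sum_sum_mul_le_of_neg_one_le hf12 hq.le12
  have e23 := sum_sum_mul_le_of_neg_one_le hf23 hq.le23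
  have e13 := sum_sum_mul_le_of_neg_one_le hf13 hq.le13
  have hpos : 0 ≤ ∑ i, ∑ j, ∑ k, q i j k * (f12 i j + f23 j k + f13 i k) :=
    sum_nonneg fun i _ => sum_nonneg fun j _ => sum_nonneg fun k _ =>
      mul_nonneg (hq.nonneg i j k) (hf i j k)
  have t23 : ∑ j, ∑ k, ∑ i, q i j k = ∑ i, ∑ j, ∑ k, q i j k := by
    rw [sum_comm (f := fun i j => ∑ k, q i j k)]
    exact sum_congr rfl fun j _ => sum_comm
  have t13 : ∑ i, ∑ k, ∑ j, q i j k = ∑ i, ∑ j, ∑ k, q i j k :=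
    sum_congr rfl fun i _ => sum_comm
  rw [sum_mul_add_add_eq_sum_margins] at hpos
  linarith

end SubCoupling

section Witness

variable {ι α β : Type*}

def witnessMargin (x : ι → ℝ) : ι → Fin 2 → ℝ := fun i => ![2 - 3 * x i, 3 * x i - 1]

def witnessPair (x : α → ℝ) (y : β → ℝ) : α → β → ℝ :=
  fun i j => 2 - 3 * (x i + y j - 2 * x i * y j)

lemma neg_one_le_witnessMargin {x : ι → ℝ} (hx : ∀ i, x i ∈ Set.Icc 0 1) (i : ι) (k : Fin 2) :
    -1 ≤ witnessMargin x i k := by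
  fin_cases k <;> simp [witnessMargin] <;> linarith [(hx i).1, (hx i).2]

lemma neg_one_le_witnessPair {x : α → ℝ} {y : β → ℝ} (hx : ∀ i, x i ∈ Set.Icc 0 1)
    (hy : ∀ j, y j ∈ Set.Icc 0 1) (i : α) (j : β) : -1 ≤ witnessPair x y i j := by
  simp only [witnessPair]
  nlinarith [mul_nonneg (sub_nonneg.2 (hx i).2) (sub_nonneg.2 (hy j).2),
    mul_nonneg (hx i).1 (hy j).1]

lemma witness_add_nonneg {x : α → ℝ} {y : β → ℝ} (hx : ∀ i, x i ∈ Set.Icc 0 1)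
    (hy : ∀ j, y j ∈ Set.Icc 0 1) (i : α) (j : β) (k : Fin 2) :
    0 ≤ witnessPair x y i j + witnessMargin y j k + witnessMargin x i k := by
  fin_cases k <;> simp [witnessPair, witnessMargin]
  · nlinarith [mul_nonneg (sub_nonneg.2 (hx i).2) (sub_nonneg.2 (hy j).2)]
  · nlinarith [mul_nonneg (hx i).1 (hy j).1]

lemma sum_sum_witnessMargin_mul [Fintype ι] (x : ι → ℝ) (q : ι → Fin 2 → ℝ) :
    ∑ i, ∑ k, witnessMargin x i k * q i k =
      2 * ∑ i, q i 0 - ∑ i, q i 1 - 3 * ∑ i, x i * q i 0 + 3 * ∑ i, x i * q i 1 := by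
  have hpt : ∀ i, ∑ k, witnessMargin x i k * q i k =
      2 * q i 0 - q i 1 - 3 * (x i * q i 0) + 3 * (x i * q i 1) := fun i => by
    simp only [Fin.sum_univ_two, witnessMargin, Matrix.cons_val_zero, Matrix.cons_val_one]
    ring
  simp only [hpt, sum_add_distrib, sum_sub_distrib, ← mul_sum]

lemma indicator_one_mem_Icc (A : Set ι) (i : ι) :
    A.indicator (1 : ι → ℝ) i ∈ Set.Icc 0 1 := by
  by_cases h : i ∈ A <;> simp [h]

lemma isSubCoupling_layers {α β : Type*} [Fintype α] [Fintype β] {p12 m₀ m₁ : α → β → ℝ}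
    {p23 : β → Fin 2 → ℝ} {p13 : α → Fin 2 → ℝ}
    (hm₀ : IsSubTransport (p13 · 0) (p23 · 0) p12 m₀)
    (hm₁ : IsSubTransport (p13 · 1) (p23 · 1) (p12 - m₀) m₁) :
    IsSubCoupling (fun i j => ![m₀ i j, m₁ i j]) p12 p23 p13 := by
  refine ⟨fun i j k => ?_, fun i j => ?_, fun j k => ?_, fun i k => ?_⟩
  · fin_cases k
    · exact hm₀.nonneg i j
    · exact hm₁.nonneg i j
  · have := hm₁.le_cap i j
    simp only [Fin.sum_univ_two, Matrix.cons_val_zero, Matrix.cons_val_one, Pi.sub_apply] at this ⊢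
    linarith
  · fin_cases k
    · exact hm₀.col_le j
    · exact hm₁.col_le j
  · fin_cases k
    · exact hm₀.row_le i
    · exact hm₁.row_le i

end Witness

section Binary

variable {r s : ℕ} {p12 : Fin r → Fin s → ℝ} {p23 : Fin s → Fin 2 → ℝ} {p13 : Fin r → Fin 2 → ℝ}

/-- The bilinear extension of `(A, B) ↦ -p_{AB•} + p_{A•1} + p_{•B1} - p_{••1}` from indicators
to all `x, y`. -/
def deficiency (p12 : Fin r → Fin s → ℝ) (p23 : Fin s → Fin 2 → ℝ) (p13 : Fin r → Fin 2 → ℝ)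
    (x : Fin r → ℝ) (y : Fin s → ℝ) : ℝ :=
  -(∑ i, ∑ j, x i * y j * p12 i j) + ∑ i, x i * p13 i 0 + ∑ j, y j * p23 j 0 - ∑ i, p13 i 0

lemma deficiency_indicator (A : Finset (Fin r)) (B : Finset (Fin s)) :
    deficiency p12 p23 p13 ((A : Set (Fin r)).indicator 1) ((B : Set (Fin s)).indicator 1) =
      -(∑ i ∈ A, ∑ j ∈ B, p12 i j) + ∑ i ∈ A, p13 i 0 + ∑ j ∈ B, p23 j 0 - ∑ i, p13 i 0 := by
  simp [deficiency, Set.indicator_apply, ite_mul, sum_ite_mem]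

lemma cutCapacity_eq_sub_deficiency (hcons : ConsTriple r s 2 p12 p23 p13) (x : Fin r → ℝ)
    (y : Fin s → ℝ) :
    cutCapacity (p13 · 0) (p23 · 0) p12 x y = ∑ i, p13 i 0 - deficiency p12 p23 p13 x y := by
  simp only [cutCapacity, deficiency, sub_mul, one_mul, sum_sub_distrib, hcons.2.2 0]
  ring

lemma objective_witness (hcons : ConsTriple r s 2 p12 p23 p13) (x : Fin r → ℝ) (y : Fin s → ℝ) :
    ∑ i, ∑ j, witnessPair x y i j * p12 i j + ∑ j, ∑ k, witnessMargin y j k * p23 j k +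
      ∑ i, ∑ k, witnessMargin x i k * p13 i k = -6 * deficiency p12 p23 p13 x y := by
  obtain ⟨hrow, hcol, hmid⟩ := hcons
  simp only [Fin.sum_univ_two] at hrow hcol
  have h12 : ∑ i, ∑ j, witnessPair x y i j * p12 i j = 2 * ∑ i, ∑ j, p12 i j
      - 3 * ∑ i, x i * ∑ j, p12 i j - 3 * ∑ j, y j * ∑ i, p12 i j
      + 6 * ∑ i, ∑ j, x i * y j * p12 i j := by
    have hpt : ∀ i j, witnessPair x y i j * p12 i j =
        2 * p12 i j - 3 * (x i * p12 i j) - 3 * (y j * p12 i j) + 6 * (x i * y j * p12 i j) :=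
      fun i j => by simp only [witnessPair]; ring
    simp only [hpt, sum_add_distrib, sum_sub_distrib, ← mul_sum]
    rw [sum_comm (f := fun i j => y j * p12 i j)]
    simp only [← mul_sum]
  have htotal : ∑ i, (p13 i 0 + p13 i 1) = ∑ j, (p23 j 0 + p23 j 1) := by
    simp only [← hrow, ← hcol]; exact sum_comm
  simp only [hrow, hcol, mul_add, sum_add_distrib] at h12 htotal
  rw [h12, sum_sum_witnessMargin_mul, sum_sum_witnessMargin_mul, deficiency]
  linear_combination 3 * hmid 0 + htotal

lemma exists_isSubCoupling_of_deficiency_le (hprob : ProbTriple r s 2 p12 p23 p13)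
    (hcons : ConsTriple r s 2 p12 p23 p13) {D : ℝ}
    (hD : ∀ (A : Finset (Fin r)) (B : Finset (Fin s)),
      deficiency p12 p23 p13 ((A : Set (Fin r)).indicator 1) ((B : Set (Fin s)).indicator 1) ≤ D) :
    ∃ q, IsSubCoupling q p12 p23 p13 ∧ 1 - 2 * D ≤ ∑ i, ∑ j, ∑ k, q i j k := by
  obtain ⟨h12, h23, h13, hsum, -, -⟩ := hprob
  have hrow : ∀ i, ∑ j, p12 i j - p13 i 0 = p13 i 1 := fun i => by
    rw [hcons.1 i, Fin.sum_univ_two]; ring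
  have hcol : ∀ j, ∑ i, p12 i j - p23 j 0 = p23 j 1 := fun j => by
    rw [hcons.2.1 j, Fin.sum_univ_two]; ring
  obtain ⟨m₀, hm₀, A₀, B₀, hT₀⟩ :=
    exists_isSubTransport_sum_eq_cutCapacity (fun i => h13 i 0) (fun j => h23 j 0) h12
  obtain ⟨m₁, hm₁, A₁, B₁, hT₁⟩ :=
    exists_isSubTransport_sum_eq_cutCapacity (p := p12 - m₀)
      (fun i => (hrow i).symm ▸ h13 i 1) (fun j => (hcol j).symm ▸ h23 j 1)
      (fun i j => sub_nonneg.2 (hm₀.le_cap i j))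
  have hflow₀ : ∑ i, p13 i 0 - D ≤ ∑ i, ∑ j, m₀ i j := by
    rw [hT₀, cutCapacity_eq_sub_deficiency hcons]
    linarith [hD A₀ B₀]
  have hflow₁ := hT₁ ▸
    hm₀.le_cutCapacity_residual (indicator_one_mem_Icc _) (indicator_one_mem_Icc _)
  rw [hcons.2.2 0, hsum] at hflow₁
  rw [funext hrow, funext hcol] at hm₁
  refine ⟨_, isSubCoupling_layers hm₀ hm₁, ?_⟩
  simp only [Fin.sum_univ_two, Matrix.cons_val_zero, Matrix.cons_val_one, sum_add_distrib]
  linarith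

lemma RTriple_eq_two_mul_deficiency (hprob : ProbTriple r s 2 p12 p23 p13)
    (hcons : ConsTriple r s 2 p12 p23 p13) {x : Fin r → ℝ} {y : Fin s → ℝ}
    (hx : ∀ i, x i ∈ Set.Icc 0 1) (hy : ∀ j, y j ∈ Set.Icc 0 1) {q : Fin r → Fin s → Fin 2 → ℝ}
    (hq : IsSubCoupling q p12 p23 p13)
    (hmass : 1 - 2 * deficiency p12 p23 p13 x y ≤ ∑ i, ∑ j, ∑ k, q i j k) :
    RTriple r s 2 p12 p23 p13 = 2 * deficiency p12 p23 p13 x y := by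
  obtain ⟨-, -, -, h12, h23, h13⟩ := hprob
  refine IsGreatest.csSup_eq ⟨⟨_, _, _, neg_one_le_witnessPair hx hy,
    neg_one_le_witnessMargin hy, neg_one_le_witnessMargin hx, witness_add_nonneg hx hy, ?_⟩, ?_⟩
  · rw [objective_witness hcons]; ring
  · rintro t ⟨f12, f23, f13, hf12, hf23, hf13, hf, rfl⟩
    linarith [hq.objective_le h12 h23 h13 hf12 hf23 hf13 hf]

end Binary

/-- The value `1 ∈ [2]` of the third coordinate is `(0 : Fin 2)`. -/
theorem statement_7_general (r s : ℕ)
    (p12 : Fin r → Fin s → ℝ) (p23 : Fin s → Fin 2 → ℝ) (p13 : Fin r → Fin 2 → ℝ)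
    (hprob : ProbTriple r s 2 p12 p23 p13) (hcons : ConsTriple r s 2 p12 p23 p13) :
    RTriple r s 2 p12 p23 p13 =
      2 * sSup {t | ∃ (A : Finset (Fin r)) (B : Finset (Fin s)),
        t = max (-(∑ i ∈ A, ∑ j ∈ B, p12 i j) + (∑ i ∈ A, p13 i 0) + (∑ j ∈ B, p23 j 0) -
              ∑ i, p13 i 0) 0} := by
  obtain ⟨⟨A₀, B₀⟩, -, hmax⟩ := exists_max_image univ
    (fun AB : Finset (Fin r) × Finset (Fin s) => deficiency p12 p23 p13
      ((AB.1 : Set (Fin r)).indicator 1) ((AB.2 : Set (Fin s)).indicator 1))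
    ⟨(∅, univ), mem_univ _⟩
  set D := deficiency p12 p23 p13 ((A₀ : Set (Fin r)).indicator 1) ((B₀ : Set (Fin s)).indicator 1)
  have hD : ∀ (A : Finset (Fin r)) (B : Finset (Fin s)),
      deficiency p12 p23 p13 ((A : Set (Fin r)).indicator 1) ((B : Set (Fin s)).indicator 1) ≤ D :=
    fun A B => hmax (A, B) (mem_univ _)
  have hD₀ : 0 ≤ D := by
    have h := hD ∅ univ
    rw [deficiency_indicator, hcons.2.2 0] at h
    simpa using h
  obtain ⟨q, hq, hmass⟩ := exists_isSubCoupling_of_deficiency_le hprob hcons hD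
  rw [RTriple_eq_two_mul_deficiency hprob hcons (indicator_one_mem_Icc _)
    (indicator_one_mem_Icc _) hq hmass, eq_comm]
  simp only [← deficiency_indicator]
  congr 1
  refine IsGreatest.csSup_eq ⟨⟨A₀, B₀, (max_eq_left hD₀).symm⟩, ?_⟩
  rintro _ ⟨A, B, rfl⟩
  exact max_le (hD A B) hD₀

/-- Theorem: exact incompatibility index on `[r] × [s] × [2]`.
Here the value `1 ∈ [2]` of the third coordinate corresponds to `(0 : Fin 2)`. -/
theorem statement_7 (r s : ℕ) (hr : 0 < r) (hs : 0 < s)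
    (p12 : Fin r → Fin s → ℝ) (p23 : Fin s → Fin 2 → ℝ) (p13 : Fin r → Fin 2 → ℝ)
    (hprob : ProbTriple r s 2 p12 p23 p13) (hcons : ConsTriple r s 2 p12 p23 p13) :
    RTriple r s 2 p12 p23 p13 =
      2 * sSup {t | ∃ (A : Finset (Fin r)) (B : Finset (Fin s)),
        t = max (-(∑ i ∈ A, ∑ j ∈ B, p12 i j) + (∑ i ∈ A, p13 i 0) + (∑ j ∈ B, p23 j 0) -
              ∑ i, p13 i 0) 0} :=
  statement_7_general r s p12 p23 p13 hprob hcons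
end
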